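/- arXiv:1309.2336 — 7 statements merged into one kernel-verified Lean document; each statement's English description precedes it below -/
import Mathlib

section
/- Let $\{g_k\}$ be a sequence of measurable functions on a measure space with $\|g_k\|_{L^{1,\infty}} \leq 1$ for all $k$, and let $\{c_k\}$ be positive constants with $\sum_k c_k = 1$. Then the function $G := (\sum_k |c_k g_k|^2)^{1/2}$ satisfies $\|G\|_{L^{1,\infty}} \leq C$ for an absolute constant $C$ (independent of the sequence). Equivalently, by scaling, $\|(\sum_k |g_k|^2)^{1/2}\|_{L^{1,\infty}} \leq C \sum_k \|g_k\|_{L^{1,\infty}}$. -/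
/-!
Split the level set `{G > λ}` at height `λ`. On `⋃ₖ {|gₖ| > λ}` the weak-type bounds simply add
up. Off that set every `gₖ` agrees with its truncation `min (|gₖ|, λ)`, whose second moment is
at most `2 λ ‖gₖ‖_{1,∞}` by the layer-cake formula, so Chebyshev's inequality at level `λ²`
costs `2 ∑ₖ ‖gₖ‖_{1,∞}` more. This gives the constant `3`.
-/

open MeasureTheory ENNReal Set

lemma setOf_sq_lt_tsum_sq_subset {X ι : Type*} (f : ι → X → ℝ) (l : ℝ) :
    {x | ENNReal.ofReal l ^ 2 < ∑' k, ENNReal.ofReal (f k x ^ 2)} ⊆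
      (⋃ k, {x | l < |f k x|}) ∪
        {x | ENNReal.ofReal l ^ 2 < ∑' k, ENNReal.ofReal (min |f k x| l ^ 2)} := by
  intro x hx
  by_cases h_large : ∃ k, l < |f k x|
  · obtain ⟨k, hk⟩ := h_large
    exact Or.inl (mem_iUnion.2 ⟨k, hk⟩)
  · simp only [not_exists, not_lt] at h_large
    have h_trunc : ∀ k, min |f k x| l ^ 2 = f k x ^ 2 := fun k => by
      rw [min_eq_left (h_large k), sq_abs]
    exact Or.inr (by simpa only [mem_ofPred_eq, h_trunc] using hx)

section
variable {X : Type*} [MeasurableSpace X] {μ : Measure X}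

lemma setLIntegral_Ioi_meas_lt_min_mul_le {f : X → ℝ} {B : ℝ≥0∞}
    (hB : ∀ t : ℝ, 0 < t → ENNReal.ofReal t * μ {x | t < |f x|} ≤ B) (l : ℝ) :
    ∫⁻ t in Ioi (0 : ℝ), μ {x | t < min |f x| l} * ENNReal.ofReal t ≤ B * ENNReal.ofReal l := by
  have h_le_indicator : ∀ t ∈ Ioi (0 : ℝ),
      μ {x | t < min |f x| l} * ENNReal.ofReal t ≤ (Iio l).indicator (fun _ => B) t := by
    intro t (ht : 0 < t)
    by_cases htl : t < l
    · rw [indicator_of_mem (show t ∈ Iio l from htl), mul_comm]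
      refine le_trans ?_ (hB t ht)
      gcongr
      exact min_le_left _ _
    · have h_empty : {x | t < min |f x| l} = ∅ :=
        eq_empty_of_forall_notMem fun x hx => htl (hx.trans_le (min_le_right _ _))
      rw [h_empty, measure_empty, zero_mul]
      exact zero_le
  calc ∫⁻ t in Ioi (0 : ℝ), μ {x | t < min |f x| l} * ENNReal.ofReal t
      ≤ ∫⁻ t in Ioi (0 : ℝ), (Iio l).indicator (fun _ => B) t :=
        setLIntegral_mono' measurableSet_Ioi h_le_indicator
    _ = B * ENNReal.ofReal l := by
        rw [setLIntegral_indicator measurableSet_Iio, Iio_inter_Ioi, setLIntegral_const,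
          Real.volume_Ioo, sub_zero]

lemma lintegral_min_abs_sq_le {f : X → ℝ} (hf : AEMeasurable f μ) {B : ℝ≥0∞}
    (hB : ∀ t : ℝ, 0 < t → ENNReal.ofReal t * μ {x | t < |f x|} ≤ B) {l : ℝ} (hl : 0 ≤ l) :
    ∫⁻ x, ENNReal.ofReal (min |f x| l ^ 2) ∂μ ≤ 2 * ENNReal.ofReal l * B := by
  have h_layer_cake := lintegral_rpow_eq_lintegral_meas_lt_mul μ
    (ae_of_all _ fun x => le_min (abs_nonneg (f x)) hl) (hf.abs.min aemeasurable_const) two_pos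
  norm_num only [Real.rpow_two, Real.rpow_one] at h_layer_cake
  rw [h_layer_cake, ENNReal.ofReal_ofNat, mul_assoc, mul_comm (ENNReal.ofReal l)]
  gcongr
  exact setLIntegral_Ioi_meas_lt_min_mul_le hB l

lemma ofReal_mul_measure_lt_abs_const_mul_le {g : X → ℝ} {B : ℝ≥0∞}
    (hB : ∀ t : ℝ, 0 < t → ENNReal.ofReal t * μ {x | t < |g x|} ≤ B) {c : ℝ} (hc : 0 < c)
    {t : ℝ} (ht : 0 < t) :
    ENNReal.ofReal t * μ {x | t < |c * g x|} ≤ ENNReal.ofReal c * B := by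
  have h_level : {x | t < |c * g x|} = {x | t / c < |g x|} := by
    ext x
    rw [mem_ofPred_eq, mem_ofPred_eq, abs_mul, abs_of_pos hc, div_lt_iff₀' hc]
  have h_factor : ENNReal.ofReal t = ENNReal.ofReal c * ENNReal.ofReal (t / c) := by
    rw [← ENNReal.ofReal_mul hc.le, mul_div_cancel₀ t hc.ne']
  rw [h_level, h_factor, mul_assoc]
  gcongr
  exact hB _ (div_pos ht hc)

variable {ι : Type*} [Countable ι] {f : ι → X → ℝ} {B : ι → ℝ≥0∞}

lemma mul_measure_sq_lt_tsum_min_sq_le (hf : ∀ k, AEMeasurable (f k) μ)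
    (hB : ∀ k, ∀ t : ℝ, 0 < t → ENNReal.ofReal t * μ {x | t < |f k x|} ≤ B k) {l : ℝ}
    (hl : 0 < l) :
    ENNReal.ofReal l *
        μ {x | ENNReal.ofReal l ^ 2 < ∑' k, ENNReal.ofReal (min |f k x| l ^ 2)} ≤
      2 * ∑' k, B k := by
  set L := ENNReal.ofReal l
  have h_meas : ∀ k, AEMeasurable (fun x => ENNReal.ofReal (min |f k x| l ^ 2)) μ :=
    fun k => (((hf k).abs.min aemeasurable_const).pow_const 2).ennreal_ofReal
  have h_markov : L ^ 2 * μ {x | L ^ 2 < ∑' k, ENNReal.ofReal (min |f k x| l ^ 2)} ≤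
      ∫⁻ x, ∑' k, ENNReal.ofReal (min |f k x| l ^ 2) ∂μ :=
    (mul_le_mul_right (measure_mono (ofPred_subset_ofPred.2 fun _ => le_of_lt)) _).trans
      (mul_meas_ge_le_lintegral₀ (AEMeasurable.tsum h_meas) _)
  have h_moment : ∫⁻ x, ∑' k, ENNReal.ofReal (min |f k x| l ^ 2) ∂μ ≤ L * (2 * ∑' k, B k) := by
    rw [lintegral_tsum h_meas, ← mul_assoc, mul_comm L, ← ENNReal.tsum_mul_left]
    exact ENNReal.tsum_le_tsum fun k => lintegral_min_abs_sq_le (hf k) (hB k) hl.le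
  rw [← ENNReal.mul_le_mul_iff_right (a := L) (by simp [L, hl]) ofReal_ne_top, ← mul_assoc, ← sq]
  exact h_markov.trans h_moment

theorem mul_measure_lt_sqrt_tsum_sq_le (hf : ∀ k, AEMeasurable (f k) μ)
    (hB : ∀ k, ∀ t : ℝ, 0 < t → ENNReal.ofReal t * μ {x | t < |f k x|} ≤ B k) {l : ℝ}
    (hl : 0 < l) :
    ENNReal.ofReal l *
        μ {x | ENNReal.ofReal l < (∑' k, ENNReal.ofReal (f k x ^ 2)) ^ ((1 : ℝ) / 2)} ≤
      3 * ∑' k, B k := by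
  set L := ENNReal.ofReal l
  have h_level : {x | L < (∑' k, ENNReal.ofReal (f k x ^ 2)) ^ ((1 : ℝ) / 2)} =
      {x | L ^ 2 < ∑' k, ENNReal.ofReal (f k x ^ 2)} := by
    ext x
    rw [mem_ofPred_eq, mem_ofPred_eq, one_div, ENNReal.lt_rpow_inv_iff two_pos, ENNReal.rpow_two]
  have h_large : L * μ (⋃ k, {x | l < |f k x|}) ≤ ∑' k, B k :=
    calc L * μ (⋃ k, {x | l < |f k x|})
        ≤ L * ∑' k, μ {x | l < |f k x|} := by gcongr; exact measure_iUnion_le _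
      _ = ∑' k, L * μ {x | l < |f k x|} := ENNReal.tsum_mul_left.symm
      _ ≤ ∑' k, B k := ENNReal.tsum_le_tsum fun k => hB k l hl
  calc L * μ {x | L < (∑' k, ENNReal.ofReal (f k x ^ 2)) ^ ((1 : ℝ) / 2)}
      ≤ L * (μ (⋃ k, {x | l < |f k x|}) +
          μ {x | L ^ 2 < ∑' k, ENNReal.ofReal (min |f k x| l ^ 2)}) := by
        rw [h_level]
        gcongr
        exact (measure_mono (setOf_sq_lt_tsum_sq_subset f l)).trans (measure_union_le _ _)
    _ ≤ ∑' k, B k + 2 * ∑' k, B k := by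
        rw [mul_add]
        exact add_le_add h_large (mul_measure_sq_lt_tsum_min_sq_le hf hB hl)
    _ = 3 * ∑' k, B k := by ring

end

/-- A square-function variant of the Stein–Weiss lemma on summing weak-type
inequalities: if `‖g_k‖_{L^{1,∞}} ≤ 1` and `c_k > 0` with `∑ c_k = 1`, then
`G = (∑ |c_k g_k|²)^{1/2}` has weak-(1,1) quasinorm bounded by an absolute constant;
equivalently, by scaling, `‖(∑|g_k|²)^{1/2}‖_{1,∞} ≲ ∑ ‖g_k‖_{1,∞}`. -/
theorem stmt_0 :
    ∃ C : ℝ≥0∞, C ≠ ⊤ ∧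
      ∀ {X : Type} [MeasurableSpace X] (μ : Measure X), SigmaFinite μ →
        ∀ (g : ℕ → X → ℝ), (∀ k, Measurable (g k)) →
        ((∀ (c : ℕ → ℝ), (∀ k, 0 < c k) → Summable c → (∑' k, c k) = 1 →
          (∀ k (l : ℝ), 0 < l → ENNReal.ofReal l * μ {x | l < |g k x|} ≤ 1) →
          ∀ (l : ℝ), 0 < l →
            ENNReal.ofReal l *
              μ {x | ENNReal.ofReal l <
                  (∑' k, ENNReal.ofReal ((c k * g k x) ^ 2)) ^ ((1:ℝ)/2)} ≤ C)
        ∧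
        (∀ (l : ℝ), 0 < l →
          ENNReal.ofReal l *
            μ {x | ENNReal.ofReal l <
                (∑' k, ENNReal.ofReal ((g k x) ^ 2)) ^ ((1:ℝ)/2)} ≤
            C * ∑' k, ⨆ (t : ℝ) (_ : 0 < t),
              ENNReal.ofReal t * μ {x | t < |g k x|})) := by
  refine ⟨3, by norm_num, fun μ _ g hg => ⟨fun c hc hc_summable hc_sum hg_weak l hl => ?_,
    fun l hl => ?_⟩⟩
  · have h_sum : ∑' k, ENNReal.ofReal (c k) = 1 := by
      rw [← ENNReal.ofReal_tsum_of_nonneg (fun k => (hc k).le) hc_summable, hc_sum, ofReal_one]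
    calc _ ≤ 3 * ∑' k, ENNReal.ofReal (c k) :=
          mul_measure_lt_sqrt_tsum_sq_le (f := fun k x => c k * g k x)
            (fun k => ((hg k).const_mul (c k)).aemeasurable)
            (fun k t ht => by
              simpa only [mul_one] using
                ofReal_mul_measure_lt_abs_const_mul_le (hg_weak k) (hc k) ht)
            hl
      _ = 3 := by rw [h_sum, mul_one]
  · exact mul_measure_lt_sqrt_tsum_sq_le (fun k => (hg k).aemeasurable)
      (fun k t ht => le_iSup₂ (f := fun (t : ℝ) (_ : 0 < t) =>
        ENNReal.ofReal t * μ {x | t < |g k x|}) t ht) hl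
end

section
/- Let $\psi_J : \mathbb{Z} \to \mathbb{C}$ be a finite collection of functions, each supported in a pairwise disjoint interval $J \subset \mathbb{Z}$ with $|J| = 2^n$, satisfying $\sum_{x} \psi_J(x) = 0$ and $\|\psi_J\|_{\ell^1} \leq C_0 2^n$. Set $\Psi_n = \sum_J \psi_J$. If $I \subset \mathbb{Z}$ is an interval with $2^{n+s} \leq |I| < 2^{n+s+1}$ for some integer $s \geq 0$, and $\chi_I := \frac{1}{|I|}\mathbf{1}_I$, then $\|\chi_I * \Psi_n\|_{\ell^1(\mathbb{Z})} \leq C 2^{-s} \|\Psi_n\|_{\ell^1(\mathbb{Z})}$ for a constant $C$ depending only on $C_0$. -/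
/-!
If `ψ` has mean zero and is supported in an interval `[b, b + m)`, its partial sums
`P t = ∑_{b ≤ z < t} ψ z` vanish outside `(b, b + m)` and are bounded by `‖ψ‖₁`, so
`‖P‖₁ ≤ m ‖ψ‖₁`. Averaging over an interval of length `L` turns `ψ` into the difference of two
translates of `P`, divided by `L`; hence `‖χ_I * ψ‖₁ ≤ 2 m / L ‖ψ‖₁`. With `m = 2^n` and
`L ≥ 2^(n+s)`, summing over the pieces `ψ_J` and using that their supports are disjoint, so that
`‖Ψ_n‖₁ = ∑_J ‖ψ_J‖₁`, gives the bound with `C = 2`.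
-/

open scoped BigOperators

/-- Discrete convolution on `ℤ`. -/
noncomputable def convZ (f g : ℤ → ℂ) (x : ℤ) : ℂ := ∑' y : ℤ, f y * g (x - y)

open Finset

theorem Finset.sum_Ico_add_sum_Ico {α M : Type*} [LinearOrder α] [LocallyFiniteOrder α]
    [AddCommMonoid M] (f : α → M) {a b c : α} (hab : a ≤ b) (hbc : b ≤ c) :
    ∑ x ∈ Ico a b, f x + ∑ x ∈ Ico b c, f x = ∑ x ∈ Ico a c, f x := by
  rw [← sum_union (Ico_disjoint_Ico_consecutive a b c), Ico_union_Ico_eq_Ico hab hbc]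

theorem norm_sum_eq_sum_norm_of_subsingleton_support {ι E : Type*} [SeminormedAddCommGroup E]
    (s : Finset ι) (f : ι → E) (hf : ∀ i ∈ s, ∀ j ∈ s, f i ≠ 0 → f j ≠ 0 → i = j) :
    ‖∑ i ∈ s, f i‖ = ∑ i ∈ s, ‖f i‖ := by
  by_cases h : ∃ i ∈ s, f i ≠ 0
  · obtain ⟨i, hi, hfi⟩ := h
    have hzero : ∀ j ∈ s, j ≠ i → f j = 0 := fun j hj hji =>
      not_not.1 fun hfj => hji (hf j hj i hi hfj hfi)
    rw [sum_eq_single_of_mem i hi hzero,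
      sum_eq_single_of_mem i hi fun j hj hji => by rw [hzero j hj hji, norm_zero]]
  · push Not at h
    rw [sum_eq_zero h, norm_zero, sum_eq_zero fun i hi => by rw [h i hi, norm_zero]]

theorem summable_norm_of_ne_finset_zero {α E : Type*} [SeminormedAddCommGroup E] {f : α → E}
    {s : Finset α} (hf : ∀ x ∉ s, f x = 0) : Summable fun x => ‖f x‖ :=
  summable_of_ne_finset_zero fun x hx => by rw [hf x hx, norm_zero]

theorem tsum_norm_finsetSum_le {α ι E : Type*} [SeminormedAddCommGroup E] (s : Finset ι)
    (f : ι → α → E) (hf : ∀ i ∈ s, Summable fun x => ‖f i x‖) :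
    ∑' x, ‖∑ i ∈ s, f i x‖ ≤ ∑ i ∈ s, ∑' x, ‖f i x‖ := by
  have hsum : Summable fun x => ∑ i ∈ s, ‖f i x‖ := summable_sum hf
  calc ∑' x, ‖∑ i ∈ s, f i x‖ ≤ ∑' x, ∑ i ∈ s, ‖f i x‖ :=
        (hsum.of_nonneg_of_le (fun _ => norm_nonneg _) fun _ => norm_sum_le _ _).tsum_le_tsum
          (fun _ => norm_sum_le _ _) hsum
    _ = ∑ i ∈ s, ∑' x, ‖f i x‖ := Summable.tsum_finsetSum hf

theorem tsum_norm_finsetSum_eq_of_disjoint {α ι E : Type*} [SeminormedAddCommGroup E]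
    (s : Finset ι) (f : ι → α → E) (J : ι → Finset α) (hsupp : ∀ i ∈ s, ∀ x ∉ J i, f i x = 0)
    (hdisj : ∀ i ∈ s, ∀ j ∈ s, i ≠ j → Disjoint (J i) (J j)) :
    ∑' x, ‖∑ i ∈ s, f i x‖ = ∑ i ∈ s, ∑' x, ‖f i x‖ := by
  have hpoint : ∀ x, ‖∑ i ∈ s, f i x‖ = ∑ i ∈ s, ‖f i x‖ := fun x =>
    norm_sum_eq_sum_norm_of_subsingleton_support s _ fun i hi j hj hfi hfj => by
      by_contra hij
      exact disjoint_left.1 (hdisj i hi j hj hij) (not_not.1 fun h => hfi (hsupp i hi x h))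
        (not_not.1 fun h => hfj (hsupp j hj x h))
  simp only [hpoint]
  exact Summable.tsum_finsetSum fun i hi => summable_norm_of_ne_finset_zero (hsupp i hi)

theorem convZ_eq_sum {f : ℤ → ℂ} {s : Finset ℤ} (hf : ∀ y ∉ s, f y = 0) (g : ℤ → ℂ) (x : ℤ) :
    convZ f g x = ∑ y ∈ s, f y * g (x - y) :=
  tsum_eq_sum fun y hy => by rw [hf y hy, zero_mul]

theorem convZ_finsetSum_right {ι : Type*} {f : ℤ → ℂ} {s : Finset ℤ} (hf : ∀ y ∉ s, f y = 0)
    (t : Finset ι) (g : ι → ℤ → ℂ) (x : ℤ) :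
    convZ f (fun y => ∑ i ∈ t, g i y) x = ∑ i ∈ t, convZ f (g i) x := by
  simp only [convZ_eq_sum hf, mul_sum]
  exact sum_comm

noncomputable def normalizedIndicator (a : ℤ) (L : ℕ) (y : ℤ) : ℂ :=
  (L : ℂ)⁻¹ * if y ∈ Ico a (a + L) then 1 else 0

theorem normalizedIndicator_eq_zero {a : ℤ} {L : ℕ} {y : ℤ} (hy : y ∉ Ico a (a + L)) :
    normalizedIndicator a L y = 0 := by
  rw [normalizedIndicator, if_neg hy, mul_zero]

theorem convZ_normalizedIndicator (a : ℤ) (L : ℕ) (g : ℤ → ℂ) (x : ℤ) :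
    convZ (normalizedIndicator a L) g x
      = (L : ℂ)⁻¹ * ∑ z ∈ Ico (x + 1 - a - L) (x + 1 - a), g z := by
  rw [convZ_eq_sum fun _ => normalizedIndicator_eq_zero, mul_sum]
  refine sum_nbij' (fun y => x - y) (fun z => x - z) ?_ ?_ ?_ ?_ ?_ <;>
    intros <;> simp_all [normalizedIndicator] <;> omega

section PartialSum

variable {ψ : ℤ → ℂ} {b : ℤ}

noncomputable def partialSum (ψ : ℤ → ℂ) (b t : ℤ) : ℂ := ∑ z ∈ Ico b t, ψ z

theorem sum_Ico_eq_partialSum_sub (hψ : ∀ z < b, ψ z = 0) {c d : ℤ} (hcd : c ≤ d) :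
    ∑ z ∈ Ico c d, ψ z = partialSum ψ b d - partialSum ψ b c := by
  rcases le_total b c with hbc | hcb
  · rw [partialSum, partialSum, ← sum_Ico_add_sum_Ico ψ hbc hcd, add_sub_cancel_left]
  have hc : partialSum ψ b c = 0 := by rw [partialSum, Ico_eq_empty_of_le hcb, sum_empty]
  have hvanish : ∑ z ∈ Ico c (min b d), ψ z = 0 :=
    sum_eq_zero fun z hz => hψ z (lt_of_lt_of_le (mem_Ico.1 hz).2 (min_le_left b d))
  rcases le_total d b with hdb | hbd
  · rw [min_eq_right hdb] at hvanish
    rw [hvanish, hc, partialSum, Ico_eq_empty_of_le hdb, sum_empty, sub_zero]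
  · rw [min_eq_left hbd] at hvanish
    rw [← sum_Ico_add_sum_Ico ψ hcb hbd, hvanish, hc, partialSum, zero_add, sub_zero]

variable {m : ℕ} (hsupp : ∀ z ∉ Ico b (b + m), ψ z = 0)
include hsupp

theorem norm_partialSum_le (t : ℤ) : ‖partialSum ψ b t‖ ≤ ∑' z, ‖ψ z‖ :=
  (norm_sum_le _ _).trans
    ((summable_norm_of_ne_finset_zero hsupp).sum_le_tsum _ fun _ _ => norm_nonneg _)

theorem convZ_normalizedIndicator_eq_partialSum_sub (a : ℤ) (L : ℕ) (x : ℤ) :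
    convZ (normalizedIndicator a L) ψ x
      = (L : ℂ)⁻¹ * (partialSum ψ b (x + 1 - a) - partialSum ψ b (x + 1 - a - L)) := by
  have hψ : ∀ z < b, ψ z = 0 := fun z hz => hsupp z fun hz' => by
    simp only [mem_Ico] at hz'; omega
  rw [convZ_normalizedIndicator, sum_Ico_eq_partialSum_sub hψ]
  omega

variable (hmean : ∑ z ∈ Ico b (b + m), ψ z = 0)
include hmean

theorem partialSum_eq_zero {t : ℤ} (ht : t ∉ Ioo b (b + m)) : partialSum ψ b t = 0 := by
  rcases le_or_gt t b with htb | hbt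
  · rw [partialSum, Ico_eq_empty_of_le htb, sum_empty]
  have hmt : b + m ≤ t := by simp only [mem_Ioo, not_and, not_lt] at ht; exact ht hbt
  rw [partialSum, ← sum_Ico_add_sum_Ico ψ (by omega) hmt, hmean, zero_add]
  exact sum_eq_zero fun z hz => hsupp z fun hz' => by simp only [mem_Ico] at hz hz'; omega

theorem summable_norm_partialSum : Summable fun t => ‖partialSum ψ b t‖ :=
  summable_of_ne_finset_zero (s := Ioo b (b + m)) fun t ht => by
    rw [partialSum_eq_zero hsupp hmean ht, norm_zero]

theorem tsum_norm_partialSum_le : ∑' t, ‖partialSum ψ b t‖ ≤ m * ∑' z, ‖ψ z‖ := by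
  rw [tsum_eq_sum (s := Ioo b (b + m)) fun t ht => by
    rw [partialSum_eq_zero hsupp hmean ht, norm_zero]]
  have hcard : (#(Ioo b (b + m)) : ℝ) ≤ m := by
    rw [Int.card_Ioo]; exact_mod_cast (by omega : (b + m - b - 1).toNat ≤ m)
  calc ∑ t ∈ Ioo b (b + m), ‖partialSum ψ b t‖ ≤ #(Ioo b (b + m)) • ∑' z, ‖ψ z‖ :=
        sum_le_card_nsmul _ _ _ fun t _ => norm_partialSum_le hsupp t
    _ ≤ m * ∑' z, ‖ψ z‖ := by
        rw [nsmul_eq_mul]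
        exact mul_le_mul_of_nonneg_right hcard (tsum_nonneg fun _ => norm_nonneg _)

theorem tsum_norm_convZ_normalizedIndicator_le (a : ℤ) (L : ℕ) :
    Summable (fun x => ‖convZ (normalizedIndicator a L) ψ x‖) ∧
      ∑' x, ‖convZ (normalizedIndicator a L) ψ x‖ ≤ 2 * m / L * ∑' z, ‖ψ z‖ := by
  set P : ℤ → ℝ := fun t => ‖partialSum ψ b t‖
  have hP : Summable P := summable_norm_partialSum hsupp hmean
  have hshift_summable : ∀ k : ℤ, Summable fun x => P (x + k) :=
    fun k => hP.comp_injective (add_left_injective k)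
  have hshift_tsum : ∀ k : ℤ, ∑' x, P (x + k) = ∑' t, P t :=
    fun k => (Equiv.addRight k).tsum_eq P
  set Q : ℤ → ℝ := fun x => (L : ℝ)⁻¹ * (P (x + (1 - a)) + P (x + (1 - a - L)))
  have hbound : ∀ x, ‖convZ (normalizedIndicator a L) ψ x‖ ≤ Q x := fun x => by
    rw [convZ_normalizedIndicator_eq_partialSum_sub hsupp, norm_mul, norm_inv,
      Complex.norm_natCast]
    refine mul_le_mul_of_nonneg_left ((norm_sub_le _ _).trans_eq ?_) (by positivity)
    simp only [P, add_sub_assoc]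
  have hQ : Summable Q := ((hshift_summable _).add (hshift_summable _)).mul_left _
  have hconv := hQ.of_nonneg_of_le (fun _ => norm_nonneg _) hbound
  refine ⟨hconv, ?_⟩
  calc ∑' x, ‖convZ (normalizedIndicator a L) ψ x‖ ≤ ∑' x, Q x :=
        hconv.tsum_le_tsum hbound hQ
    _ = (L : ℝ)⁻¹ * (2 * ∑' t, P t) := by
        rw [tsum_mul_left, (hshift_summable _).tsum_add (hshift_summable _), hshift_tsum,
          hshift_tsum, two_mul]
    _ ≤ (L : ℝ)⁻¹ * (2 * (m * ∑' z, ‖ψ z‖)) := by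
        gcongr; exact tsum_norm_partialSum_le hsupp hmean
    _ = 2 * m / L * ∑' z, ‖ψ z‖ := by ring

end PartialSum

theorem stmt_1_general (C₀ : ℝ) :
    ∃ C : ℝ, 0 < C ∧
      ∀ (n s : ℕ) (ι : Finset ℕ) (J : ℕ → Finset ℤ) (ψ : ℕ → ℤ → ℂ),
        (∀ i ∈ ι, ∃ a : ℤ, J i = Finset.Ico a (a + 2 ^ n)) →
        (∀ i ∈ ι, ∀ j ∈ ι, i ≠ j → Disjoint (J i) (J j)) →
        (∀ i ∈ ι, ∀ x : ℤ, x ∉ J i → ψ i x = 0) →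
        (∀ i ∈ ι, ∑ x ∈ J i, ψ i x = 0) →
        (∀ i ∈ ι, ∑ x ∈ J i, ‖ψ i x‖ ≤ C₀ * 2 ^ n) →
        ∀ (a : ℤ) (len : ℕ), 2 ^ (n + s) ≤ len → len < 2 ^ (n + s + 1) →
          (∑' x : ℤ, ‖convZ
              (fun y => ((len : ℂ))⁻¹ * (if y ∈ Finset.Ico a (a + (len : ℤ)) then 1 else 0))
              (fun y => ∑ i ∈ ι, ψ i y) x‖)
            ≤ C / 2 ^ s * ∑' x : ℤ, ‖∑ i ∈ ι, ψ i x‖ := by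
  refine ⟨2, two_pos, fun n s ι J ψ hJ hdisj hsupp hmean _ a len hlen _ => ?_⟩
  have hpiece : ∀ i ∈ ι, Summable (fun x => ‖convZ (normalizedIndicator a len) (ψ i) x‖) ∧
      ∑' x, ‖convZ (normalizedIndicator a len) (ψ i) x‖ ≤ 2 * 2 ^ n / len * ∑' x, ‖ψ i x‖ := by
    intro i hi
    obtain ⟨b, hb⟩ := hJ i hi
    have hsupp_i := hsupp i hi
    have hmean_i := hmean i hi
    rw [hb] at hsupp_i hmean_i
    exact_mod_cast tsum_norm_convZ_normalizedIndicator_le (m := 2 ^ n) (b := b)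
      (by exact_mod_cast hsupp_i) (by exact_mod_cast hmean_i) a len
  have hratio : 2 * (2 : ℝ) ^ n / len ≤ 2 / 2 ^ s :=
    calc 2 * (2 : ℝ) ^ n / len ≤ 2 * 2 ^ n / 2 ^ (n + s) := by gcongr; exact_mod_cast hlen
      _ = 2 / 2 ^ s := by rw [pow_add]; field_simp
  calc ∑' x, ‖convZ (normalizedIndicator a len) (fun y => ∑ i ∈ ι, ψ i y) x‖
      = ∑' x, ‖∑ i ∈ ι, convZ (normalizedIndicator a len) (ψ i) x‖ := by
        simp only [convZ_finsetSum_right fun _ => normalizedIndicator_eq_zero]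
    _ ≤ ∑ i ∈ ι, ∑' x, ‖convZ (normalizedIndicator a len) (ψ i) x‖ :=
        tsum_norm_finsetSum_le _ _ fun i hi => (hpiece i hi).1
    _ ≤ ∑ i ∈ ι, 2 * 2 ^ n / len * ∑' x, ‖ψ i x‖ := sum_le_sum fun i hi => (hpiece i hi).2
    _ = 2 * 2 ^ n / len * ∑' x, ‖∑ i ∈ ι, ψ i x‖ := by
        rw [← mul_sum, tsum_norm_finsetSum_eq_of_disjoint ι ψ J hsupp hdisj]
    _ ≤ 2 / 2 ^ s * ∑' x, ‖∑ i ∈ ι, ψ i x‖ :=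
        mul_le_mul_of_nonneg_right hratio (tsum_nonneg fun _ => norm_nonneg _)

/-- If `Ψ_n = ∑_J ψ_J` with the `ψ_J` supported in disjoint intervals `J` of length
`2^n`, each with mean zero and `‖ψ_J‖₁ ≤ C₀ 2^n`, and `I` is an interval with
`2^{n+s} ≤ |I| < 2^{n+s+1}`, then `‖χ_I * Ψ_n‖₁ ≤ C 2^{-s} ‖Ψ_n‖₁` with `C = C(C₀)`. -/
theorem stmt_1 (C₀ : ℝ) (hC₀ : 0 < C₀) :
    ∃ C : ℝ, 0 < C ∧
      ∀ (n s : ℕ) (ι : Finset ℕ) (J : ℕ → Finset ℤ) (ψ : ℕ → ℤ → ℂ),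
        (∀ i ∈ ι, ∃ a : ℤ, J i = Finset.Ico a (a + 2 ^ n)) →
        (∀ i ∈ ι, ∀ j ∈ ι, i ≠ j → Disjoint (J i) (J j)) →
        (∀ i ∈ ι, ∀ x : ℤ, x ∉ J i → ψ i x = 0) →
        (∀ i ∈ ι, ∑ x ∈ J i, ψ i x = 0) →
        (∀ i ∈ ι, ∑ x ∈ J i, ‖ψ i x‖ ≤ C₀ * 2 ^ n) →
        ∀ (a : ℤ) (len : ℕ), 2 ^ (n + s) ≤ len → len < 2 ^ (n + s + 1) →
          (∑' x : ℤ, ‖convZ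
              (fun y => ((len : ℂ))⁻¹ * (if y ∈ Finset.Ico a (a + (len : ℤ)) then 1 else 0))
              (fun y => ∑ i ∈ ι, ψ i y) x‖)
            ≤ C / 2 ^ s * ∑' x : ℤ, ‖∑ i ∈ ι, ψ i x‖ :=
  stmt_1_general C₀
end

section
/- Let $H_k = \prod_{a=1}^d [-2^{a(k)}, 2^{a(k)})$ be a sequence of symmetric dyadic rectangles in $\mathbb{Z}^d$ with each coordinate exponent $a(k)$ non-decreasing in $k$. Define the eccentricity quantity $\varepsilon(l)^2 := \sup_k B(H_{k+l}, H_k)/|H_{k+l}|$, where $B(E, H) := |\{x : \partial E \cap (H - x) \neq \emptyset\}|$. Then $\sum_l \varepsilon(l) < \infty$ if and only if there exists $L$ such that $\min_{1 \leq a \leq d} (a(k+L) - a(k)) \geq 1$ for every $k$. Moreover, if such an $L$ exists, then $\varepsilon(l)^2 \lesssim 2^{-l/L}$, and hence $\sum_l \varepsilon(l)^\theta < \infty$ for every $\theta > 0$. -/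
/-!
Every boundary point of the box `H_{k+l}` lies on one of its `2d` faces, and a translate of `H_k`
can only meet a face orthogonal to direction `a` if the translation vector lies in a slab of
width `≈ 2^{a(k)}` in that direction. Summing over faces,
`B(H_{k+l}, H_k) ≤ d 2^d 2^{-s} |H_{k+l}|` with `s = min_a (a(k+l) - a(k))`. An `L` with
`a(k+L) ≥ a(k) + 1` for all `k`, `a` forces `s ≥ ⌊l/L⌋`, so `ε(l)^θ` decays geometrically.
Without such an `L`, for every `l` some direction does not grow from `k` to `k + l`; then the
translates sliding along that face already give `B(H_{k+l}, H_k) ≥ |H_{k+l}|`, so `ε(l) ≥ 1`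
for all `l`.
-/

open scoped ENNReal

/-- The symmetric dyadic rectangle `∏_a [-2^{e a}, 2^{e a})` in `ℤ^d`. -/
def Hrect (d : ℕ) (e : Fin d → ℕ) : Set (Fin d → ℤ) :=
  {x | ∀ a, -(2 ^ (e a) : ℤ) ≤ x a ∧ x a < 2 ^ (e a)}

/-- The (discrete) boundary of a set `E ⊂ ℤ^d`. -/
def dBdry {d : ℕ} (E : Set (Fin d → ℤ)) : Set (Fin d → ℤ) :=
  {x | x ∈ E ∧ ∃ y, (∀ a, |x a - y a| ≤ 1) ∧ y ∉ E}

/-- `B(E,H) = |{x : ∂E ∩ (H - x) ≠ ∅}|`. -/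
noncomputable def Bqty {d : ℕ} (E H : Set (Fin d → ℤ)) : ℕ :=
  Nat.card {x : Fin d → ℤ | ∃ z ∈ dBdry E, z + x ∈ H}

/-- The eccentricity quantity `ε(l)² = sup_k B(H_{k+l}, H_k)/|H_{k+l}|`. -/
noncomputable def eps2 (d : ℕ) (e : Fin d → ℕ → ℕ) (l : ℕ) : ℝ≥0∞ :=
  ⨆ k : ℕ, (Bqty (Hrect d (fun a => e a (k + l))) (Hrect d (fun a => e a k)) : ℝ≥0∞)
    / (Nat.card (Hrect d (fun a => e a (k + l))) : ℝ≥0∞)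

open Function
open scoped Pointwise

lemma ENNReal.tsum_rpow_ne_top_of_le_mul_two_rpow {f : ℕ → ℝ≥0∞} {c : ℝ≥0∞} (hc : c ≠ ⊤)
    {L : ℝ} (hL : 0 < L) {p : ℝ} (hp : 0 < p) (hf : ∀ l : ℕ, f l ≤ c * 2 ^ (-(l : ℝ) / L)) :
    ∑' l, f l ^ p ≠ ⊤ := by
  set r : ℝ≥0∞ := 2 ^ (-p / L)
  have hr : r < 1 :=
    ENNReal.rpow_lt_one_of_one_lt_of_neg one_lt_two (div_neg_of_neg_of_pos (by linarith) hL)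
  have hfr : ∀ l : ℕ, f l ^ p ≤ c ^ p * r ^ l := fun l =>
    calc f l ^ p ≤ (c * 2 ^ (-(l : ℝ) / L)) ^ p := ENNReal.rpow_le_rpow (hf l) hp.le
      _ = c ^ p * r ^ l := by
        rw [ENNReal.mul_rpow_of_nonneg _ _ hp.le, ← ENNReal.rpow_mul, ← ENNReal.rpow_natCast,
          ← ENNReal.rpow_mul]
        congr 2
        ring
  refine ne_top_of_le_ne_top ?_ (ENNReal.tsum_le_tsum hfr)
  rw [ENNReal.tsum_mul_left, ENNReal.tsum_geometric]
  exact ENNReal.mul_ne_top (ENNReal.rpow_ne_top_of_nonneg hp.le hc)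
    (ENNReal.inv_ne_top.2 (tsub_pos_of_lt hr).ne')

lemma ENNReal.tsum_eq_top_of_one_le {f : ℕ → ℝ≥0∞} (hf : ∀ l, 1 ≤ f l) : ∑' l, f l = ⊤ :=
  top_le_iff.1 <| (ENNReal.tsum_const_eq_top_of_ne_zero one_ne_zero).symm.le.trans
    (ENNReal.tsum_le_tsum hf)

namespace Eccentricity

variable {d : ℕ}

noncomputable def box (M : Fin d → ℕ) : Finset (Fin d → ℤ) :=
  Fintype.piFinset fun a => Finset.Ico (-(M a : ℤ)) (M a)

def hitSet (E H : Set (Fin d → ℤ)) : Set (Fin d → ℤ) :=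
  {x | ∃ z ∈ dBdry E, z + x ∈ H}

lemma Bqty_eq_ncard (E H : Set (Fin d → ℤ)) : Bqty E H = (hitSet E H).ncard :=
  Nat.card_coe_set_eq _

lemma hitSet_subset_sub (E H : Set (Fin d → ℤ)) : hitSet E H ⊆ H - E := by
  rintro x ⟨z, hz, hzx⟩
  exact ⟨z + x, hzx, z, hz.1, add_sub_cancel_left z x⟩

lemma hitSet_finite {E H : Set (Fin d → ℤ)} (hE : E.Finite) (hH : H.Finite) :
    (hitSet E H).Finite :=
  (hH.sub hE).subset (hitSet_subset_sub E H)

lemma Hrect_eq_box (e : Fin d → ℕ) : Hrect d e = ↑(box fun a => 2 ^ e a) := by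
  ext x
  simp [Hrect, box]

lemma card_box (M : Fin d → ℕ) : (box M).card = ∏ a, 2 * M a := by
  simp only [box, Fintype.card_piFinset, Int.card_Ico]
  congr 1; ext a; omega

lemma mem_box {M : Fin d → ℕ} {x : Fin d → ℤ} :
    x ∈ box M ↔ ∀ a, -(M a : ℤ) ≤ x a ∧ x a < M a := by
  simp [box]

lemma exists_eq_of_mem_dBdry_box {M : Fin d → ℕ} {z : Fin d → ℤ} (hz : z ∈ dBdry ↑(box M)) :
    ∃ a, z a = -(M a : ℤ) ∨ z a = M a - 1 := by
  obtain ⟨hzM, y, hyz, hyM⟩ := hz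
  rw [Finset.mem_coe, mem_box] at hzM hyM
  push Not at hyM
  obtain ⟨a, ha⟩ := hyM
  have := abs_le.1 (hyz a)
  have := hzM a
  exact ⟨a, by grind⟩

section UpperBound

variable (M N : Fin d → ℕ)

/-- Contains every `x` with `z + x ∈ box N` for some `z` on one of the two faces of `box M`
orthogonal to `a`. -/
noncomputable def strip (a : Fin d) : Finset (Fin d → ℤ) :=
  Fintype.piFinset <| update (fun b => Finset.Ico (-(M b + N b : ℤ)) (M b + N b)) a
    (Finset.Ico (1 - M a - N a : ℤ) (1 - M a + N a) ∪ Finset.Ico (M a - N a : ℤ) (M a + N a))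

lemma hitSet_box_subset_biUnion_strip :
    hitSet (box M : Set (Fin d → ℤ)) (box N) ⊆ ↑(Finset.univ.biUnion (strip M N)) := by
  rintro x ⟨z, hz, hzx⟩
  obtain ⟨a, ha⟩ := exists_eq_of_mem_dBdry_box hz
  have hzM := mem_box.1 hz.1
  have hzxN := mem_box.1 hzx
  simp only [Finset.coe_biUnion, Finset.coe_univ, Set.mem_univ, Set.iUnion_true,
    Set.mem_iUnion, Finset.mem_coe, strip, Fintype.mem_piFinset]
  refine ⟨a, fun b => ?_⟩
  have := hzM b
  have := hzxN b
  rcases eq_or_ne b a with rfl | hb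
  · simp only [update_self, Finset.mem_union, Finset.mem_Ico, Pi.add_apply] at *
    omega
  · simp only [update_of_ne hb, Finset.mem_Ico, Pi.add_apply] at *
    omega

lemma card_strip_le (a : Fin d) :
    (strip M N a).card ≤ ∏ b, update (fun b => 2 * (M b + N b)) a (4 * N a) b := by
  rw [strip, Fintype.card_piFinset]
  refine Finset.prod_le_prod' fun b _ => ?_
  rcases eq_or_ne b a with rfl | hb
  · simp only [update_self]
    refine (Finset.card_union_le _ _).trans ?_
    simp only [Int.card_Ico]
    omega
  · simp only [update_of_ne hb, Int.card_Ico]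
    omega

lemma two_pow_mul_card_strip_le {s : ℕ} (hs : ∀ b, 2 ^ s * N b ≤ M b) (a : Fin d) :
    2 ^ s * (strip M N a).card ≤ ∏ b, 4 * M b := by
  have hNM : ∀ b, N b ≤ M b := fun b => (Nat.le_mul_of_pos_left _ (by positivity)).trans (hs b)
  calc 2 ^ s * (strip M N a).card
      ≤ 2 ^ s * ∏ b, update (fun b => 2 * (M b + N b)) a (4 * N a) b :=
        Nat.mul_le_mul_left _ (card_strip_le M N a)
    _ = ∏ b, update (fun b => 2 * (M b + N b)) a (2 ^ s * (4 * N a)) b := by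
        simp only [Finset.prod_update_of_mem (Finset.mem_univ a), mul_assoc]
    _ ≤ ∏ b, 4 * M b := Finset.prod_le_prod' fun b _ => by
        rcases eq_or_ne b a with rfl | hb
        · rw [update_self]; linarith [hs b]
        · rw [update_of_ne hb]; linarith [hNM b]

lemma two_pow_mul_Bqty_box_le {s : ℕ} (hs : ∀ b, 2 ^ s * N b ≤ M b) :
    2 ^ s * Bqty (box M : Set (Fin d → ℤ)) (box N) ≤ d * 2 ^ d * (box M).card := by
  have hB : Bqty (box M : Set (Fin d → ℤ)) (box N) ≤ ∑ a, (strip M N a).card := by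
    rw [Bqty_eq_ncard]
    refine (Set.ncard_le_ncard (hitSet_box_subset_biUnion_strip M N)).trans ?_
    rw [Set.ncard_coe_finset]
    exact Finset.card_biUnion_le
  calc 2 ^ s * Bqty (box M : Set (Fin d → ℤ)) (box N)
      ≤ ∑ a, 2 ^ s * (strip M N a).card := by
        rw [← Finset.mul_sum]; exact Nat.mul_le_mul_left _ hB
    _ ≤ ∑ _a : Fin d, ∏ b, 4 * M b :=
        Finset.sum_le_sum fun a _ => two_pow_mul_card_strip_le M N hs a
    _ = d * 2 ^ d * (box M).card := by
        have h4 : ∀ b, 4 * M b = 2 * (2 * M b) := fun b => by ring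
        simp only [Finset.sum_const, Finset.card_univ, Fintype.card_fin, smul_eq_mul, card_box,
          h4, Finset.prod_mul_distrib, Finset.prod_const, mul_assoc]

end UpperBound

/-- `y ↦ update (-y) a (y a + 1 - M a)` injects `box M` into the hit set: it moves the boundary
point `update y a (M a - 1)` of `box M` to `update 0 a (y a)`, which lies in `box N` as
`N a = M a`. -/
lemma card_box_le_Bqty_box {M N : Fin d → ℕ} (hN : ∀ b, 0 < N b) {a : Fin d} (ha : N a = M a) :
    (box M).card ≤ Bqty (box M : Set (Fin d → ℤ)) (box N) := by
  rw [Bqty_eq_ncard, ← Set.ncard_coe_finset]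
  refine Set.ncard_le_ncard_of_injOn (fun y => update (-y) a (y a + 1 - M a)) ?_ ?_
    (hitSet_finite (box M).finite_toSet (box N).finite_toSet)
  · intro y hy
    have hyM := mem_box.1 hy
    have hMa : 0 < M a := ha ▸ hN a
    refine ⟨update y a (M a - 1), ⟨?_, update y a (M a), fun b => ?_, ?_⟩, ?_⟩
    · refine mem_box.2 fun b => ?_
      rcases eq_or_ne b a with rfl | hb
      · simp only [update_self]; omega
      · simp only [update_of_ne hb]; exact hyM b
    · rcases eq_or_ne b a with rfl | hb
      · simp
      · simp [update_of_ne hb]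
    · intro h
      have := (mem_box.1 h a).2
      simp at this
    · refine mem_box.2 fun b => ?_
      have := hN b
      have := hyM b
      rcases eq_or_ne b a with rfl | hb
      · simp only [Pi.add_apply, update_self]; omega
      · simp only [Pi.add_apply, update_of_ne hb, Pi.neg_apply]; omega
  · intro y _ y' _ h
    funext b
    have := congrFun h b
    rcases eq_or_ne b a with rfl | hb
    · simpa using this
    · simpa [update_of_ne hb] using this

lemma natCard_Hrect (e : Fin d → ℕ) : Nat.card (Hrect d e) = (box fun a => 2 ^ e a).card := by
  rw [Hrect_eq_box, Nat.card_coe_set_eq, Set.ncard_coe_finset]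

lemma card_box_two_pow_pos (e : Fin d → ℕ) : 0 < (box fun a => 2 ^ e a).card := by
  rw [card_box]
  exact Finset.prod_pos fun a _ => by positivity

lemma Bqty_div_natCard_Hrect_le {f g : Fin d → ℕ} {s : ℕ} (h : ∀ a, g a + s ≤ f a) :
    (Bqty (Hrect d f) (Hrect d g) : ℝ≥0∞) / Nat.card (Hrect d f) ≤ d * 2 ^ d / 2 ^ s := by
  have key := two_pow_mul_Bqty_box_le (fun a => 2 ^ f a) (fun a => 2 ^ g a) (s := s)
    fun a => by rw [← pow_add, add_comm]; exact Nat.pow_le_pow_right two_pos (h a)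
  rw [natCard_Hrect, Hrect_eq_box, Hrect_eq_box]
  have hc0 : ((box fun a => 2 ^ f a).card : ℝ≥0∞) ≠ 0 := by
    exact_mod_cast (card_box_two_pow_pos f).ne'
  calc _ = (2 ^ s * Bqty (box fun a => 2 ^ f a : Set (Fin d → ℤ)) (box fun a => 2 ^ g a) : ℝ≥0∞)
        / (2 ^ s * (box fun a => 2 ^ f a).card) :=
        (ENNReal.mul_div_mul_left _ _ (by positivity) (by simp)).symm
    _ ≤ d * 2 ^ d * (box fun a => 2 ^ f a).card / (2 ^ s * (box fun a => 2 ^ f a).card) :=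
        ENNReal.div_le_div_right (by exact_mod_cast key) _
    _ = d * 2 ^ d / 2 ^ s := ENNReal.mul_div_mul_right _ _ hc0 (by simp)

lemma one_le_Bqty_div_natCard_Hrect {f g : Fin d → ℕ} (h : ∃ a, g a = f a) :
    1 ≤ (Bqty (Hrect d f) (Hrect d g) : ℝ≥0∞) / Nat.card (Hrect d f) := by
  obtain ⟨a, ha⟩ := h
  rw [natCard_Hrect, Hrect_eq_box, Hrect_eq_box,
    ENNReal.le_div_iff_mul_le (by simp [(card_box_two_pow_pos f).ne']) (by simp), one_mul]
  exact_mod_cast card_box_le_Bqty_box (fun b => by positivity) (a := a) (by simp [ha])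

lemma add_mul_le_of_forall_add_one_le {e : ℕ → ℕ} {L : ℕ} (h : ∀ k, e k + 1 ≤ e (k + L))
    (k t : ℕ) : e k + t ≤ e (k + t * L) := by
  induction t with
  | zero => simp
  | succ t ih =>
    have := h (k + t * L)
    rw [show k + (t + 1) * L = k + t * L + L by ring]
    omega

lemma add_div_le_of_forall_add_one_le {e : ℕ → ℕ} (he : Monotone e) {L : ℕ}
    (h : ∀ k, e k + 1 ≤ e (k + L)) (k l : ℕ) : e k + l / L ≤ e (k + l) :=
  (add_mul_le_of_forall_add_one_le h k (l / L)).trans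
    (he (Nat.add_le_add_left (Nat.div_mul_le_self l L) k))

lemma eps2_le_div_two_pow {e : Fin d → ℕ → ℕ} (hmono : ∀ a, Monotone (e a)) {L : ℕ}
    (hL : ∀ k a, e a k + 1 ≤ e a (k + L)) (l : ℕ) :
    eps2 d e l ≤ d * 2 ^ d / 2 ^ (l / L) :=
  iSup_le fun k => Bqty_div_natCard_Hrect_le fun a =>
    add_div_le_of_forall_add_one_le (hmono a) (fun k => hL k a) k l

lemma one_le_eps2 {e : Fin d → ℕ → ℕ} (hmono : ∀ a, Monotone (e a)) {l k : ℕ} {a : Fin d}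
    (h : e a (k + l) ≤ e a k) : 1 ≤ eps2 d e l :=
  le_iSup_of_le k <| one_le_Bqty_div_natCard_Hrect
    ⟨a, le_antisymm (hmono a (Nat.le_add_right k l)) h⟩

lemma inv_two_pow_div_le (l L : ℕ) :
    ((2 : ℝ≥0∞) ^ (l / L))⁻¹ ≤ 2 * 2 ^ (-(l : ℝ) / L) := by
  have hfloor : (l : ℝ) / L < (l / L : ℕ) + 1 := by
    rw [← Nat.floor_div_eq_div (K := ℝ)]
    exact Nat.lt_floor_add_one _
  have h2 : (2 : ℝ≥0∞) * 2 ^ (-(l : ℝ) / L) = 2 ^ (1 + -(l : ℝ) / L) := by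
    rw [ENNReal.rpow_add _ _ two_ne_zero (by simp), ENNReal.rpow_one]
  rw [h2, ← ENNReal.rpow_natCast, ← ENNReal.rpow_neg]
  exact ENNReal.rpow_le_rpow_of_exponent_le one_le_two (by rw [neg_div]; linarith)

lemma eps2_le_mul_two_rpow {e : Fin d → ℕ → ℕ} (hmono : ∀ a, Monotone (e a)) {L : ℕ}
    (hL : ∀ k a, e a k + 1 ≤ e a (k + L)) (l : ℕ) :
    eps2 d e l ≤ d * 2 ^ (d + 1) * 2 ^ (-(l : ℝ) / L) :=
  calc eps2 d e l ≤ d * 2 ^ d * (2 ^ (l / L))⁻¹ := eps2_le_div_two_pow hmono hL l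
    _ ≤ d * 2 ^ d * (2 * 2 ^ (-(l : ℝ) / L)) := by gcongr; exact inv_two_pow_div_le l L
    _ = d * 2 ^ (d + 1) * 2 ^ (-(l : ℝ) / L) := by ring

end Eccentricity

open Eccentricity

/-- Summable eccentricity `∑_l ε(l) < ∞` is equivalent to the existence of `L` with
`min_a (a(k+L) - a(k)) ≥ 1` for all `k`; moreover such an `L` gives
`ε(l)² ≲ 2^{-l/L}` and hence `∑_l ε(l)^θ < ∞` for every `θ > 0`. -/
theorem stmt_6 (d : ℕ) (hd : 0 < d) (e : Fin d → ℕ → ℕ)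
    (hmono : ∀ a, Monotone (e a)) :
    ((∑' l : ℕ, (eps2 d e l) ^ ((1:ℝ)/2)) ≠ ⊤ ↔
      ∃ L : ℕ, ∀ k : ℕ, ∀ a : Fin d, e a k + 1 ≤ e a (k + L))
    ∧ ∀ L : ℕ, (∀ k : ℕ, ∀ a : Fin d, e a k + 1 ≤ e a (k + L)) →
        (∃ c : ℝ≥0∞, c ≠ ⊤ ∧ ∀ l : ℕ,
          eps2 d e l ≤ c * (2 : ℝ≥0∞) ^ (-(l : ℝ) / (L : ℝ)))
        ∧ ∀ θ : ℝ, 0 < θ → (∑' l : ℕ, (eps2 d e l) ^ (θ / 2)) ≠ ⊤ := by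
  have hc : (d : ℝ≥0∞) * 2 ^ (d + 1) ≠ ⊤ := ENNReal.mul_ne_top (by simp) (by simp)
  have hL_pos : ∀ L, (∀ k a, e a k + 1 ≤ e a (k + L)) → 0 < L := fun L hL =>
    Nat.pos_of_ne_zero fun h0 => by simpa [h0] using hL 0 ⟨0, hd⟩
  have hsum : ∀ L, (∀ k a, e a k + 1 ≤ e a (k + L)) →
      ∀ θ : ℝ, 0 < θ → (∑' l : ℕ, (eps2 d e l) ^ (θ / 2)) ≠ ⊤ := fun L hL θ hθ =>
    ENNReal.tsum_rpow_ne_top_of_le_mul_two_rpow hc (by exact_mod_cast hL_pos L hL)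
      (half_pos hθ) (eps2_le_mul_two_rpow hmono hL)
  refine ⟨⟨fun h => ?_, fun ⟨L, hL⟩ => hsum L hL 1 one_pos⟩,
    fun L hL => ⟨⟨_, hc, eps2_le_mul_two_rpow hmono hL⟩, hsum L hL⟩⟩
  by_contra hno
  push Not at hno
  refine h (ENNReal.tsum_eq_top_of_one_le fun l => ENNReal.one_le_rpow ?_ (by norm_num))
  obtain ⟨k, a, hka⟩ := hno l
  exact one_le_eps2 hmono (Nat.le_of_lt_succ hka)
end

section
/- Let $\sigma_k$ be the partition of $\mathbb{Z}^d$ into dyadic rectangles $\prod_{a=1}^d 2^{a(k)}[m_a, m_a+1)$, and for each $Q \in \sigma_k$ with center $x_Q$, let $g : \mathbb{Z}^d \to [0,\infty)$ satisfy: (i) for every $x \in Q$, $g(x) \lesssim \sum_{Q' \in \sigma_k, Q' \subset 3Q} g(x_{Q'})$, and (ii) for every $Q$ there is a subset $X(Q) \subset Q$ with $|X(Q)| \gtrsim_d |Q|$ on which $g(x_Q) \leq \inf_{y \in X(Q)} g(y)$. Then for each $1 \leq p < \infty$, $\|g\|_{\ell^p(\mathbb{Z}^d)} \approx_p \|\sum_{Q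 \in \sigma_k} g(x_Q) \mathbf{1}_{3Q}\|_{\ell^p(\mathbb{Z}^d)}$, with implied constants depending only on $p$ and $d$. -/
open scoped ENNReal

/-- The atom `Q_m = ∏_a [2^{s a} m_a, 2^{s a}(m_a+1))` of the partition `σ` of `ℤ^d`
into congruent dyadic rectangles. -/
noncomputable def atomQ (d : ℕ) (s : Fin d → ℕ) (m : Fin d → ℤ) : Finset (Fin d → ℤ) :=
  Finset.Icc (fun a => 2 ^ (s a) * m a) (fun a => 2 ^ (s a) * (m a + 1) - 1)

/-- The tripled rectangle `3Q_m`, concentric with `Q_m` with triple side lengths. -/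
noncomputable def atomQ3 (d : ℕ) (s : Fin d → ℕ) (m : Fin d → ℤ) : Finset (Fin d → ℤ) :=
  Finset.Icc (fun a => 2 ^ (s a) * (m a - 1)) (fun a => 2 ^ (s a) * (m a + 2) - 1)

/-!
Write `x ↦ m(x)` for the index of the atom containing `x`; then `x ∈ 3Q_m` exactly when
`m ∈ m(x) + {-1,0,1}^d`, so the discretization at `x` is a sum of `3^d` center values.
The lower bound is hypothesis (i) applied pointwise. For the upper bound, Jensen's inequality
on these `3^d` terms and Fubini reduce the left side to `∑_m |3Q_m| g(x_m)^p`, and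
`|3Q_m| = 3^d |Q_m| ≤ 3^d c₂⁻¹ |X(Q_m)|`, while `|X(Q_m)| g(x_m)^p ≤ ∑_{y ∈ Q_m} g(y)^p`
by (ii); summing over the partition gives `‖g‖_p^p`.
-/

open Finset
open scoped NNReal

theorem Int.le_ediv_and_ediv_le_iff {x n a b : ℤ} (hn : 0 < n) :
    a ≤ x / n ∧ x / n ≤ b ↔ n * a ≤ x ∧ x ≤ n * (b + 1) - 1 := by
  rw [Int.le_ediv_iff_mul_le hn, ← Int.lt_add_one_iff (a := x / n), Int.ediv_lt_iff_lt_mul hn,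
    mul_comm, mul_comm (b + 1), Int.le_sub_one_iff]

variable {β : Type*}

theorem tsum_ite_mem_finset {α : Type*} [AddCommMonoid α] [TopologicalSpace α] [DecidableEq β]
    (S : Finset β) (f : β → α) :
    ∑' x, (if x ∈ S then f x else 0) = ∑ x ∈ S, f x := by
  rw [sum_eq_tsum_indicator]
  simp only [Set.indicator_apply, mem_coe]

theorem ENNReal.mul_card_mul_le_sum_of_le {Q X : Finset β} {f : β → ℝ≥0∞} {c a : ℝ≥0∞}
    (hXQ : X ⊆ Q) (hcard : c * #Q ≤ #X) (ha : ∀ y ∈ X, a ≤ f y) :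
    c * #Q * a ≤ ∑ y ∈ Q, f y :=
  calc c * #Q * a ≤ #X * a := by gcongr
    _ = ∑ _y ∈ X, a := by rw [sum_const, nsmul_eq_mul]
    _ ≤ ∑ y ∈ X, f y := sum_le_sum ha
    _ ≤ ∑ y ∈ Q, f y := sum_le_sum_of_subset hXQ

namespace DyadicAtom

variable {d : ℕ} {s : Fin d → ℕ}

def index (s : Fin d → ℕ) (x : Fin d → ℤ) : Fin d → ℤ := fun a => x a / 2 ^ s a

theorem mem_atomQ_iff {m x : Fin d → ℤ} : x ∈ atomQ d s m ↔ index s x = m := by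
  simp only [atomQ, mem_Icc, Pi.le_def, funext_iff, index, ← forall_and]
  refine forall_congr' fun a => ?_
  rw [← Int.le_ediv_and_ediv_le_iff (by positivity)]
  omega

theorem mem_atomQ3_iff {m x : Fin d → ℤ} :
    x ∈ atomQ3 d s m ↔ m ∈ Icc (index s x - 1) (index s x + 1) := by
  simp only [atomQ3, mem_Icc, Pi.le_def, index, Pi.sub_apply, Pi.add_apply, Pi.one_apply,
    ← forall_and]
  refine forall_congr' fun a => ?_
  rw [show m a + 2 = m a + 1 + 1 by ring, ← Int.le_ediv_and_ediv_le_iff (by positivity)]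
  omega

theorem card_atomQ (m : Fin d → ℤ) : #(atomQ d s m) = ∏ a, 2 ^ s a := by
  simp only [atomQ, Pi.card_Icc, Int.card_Icc]
  refine prod_congr rfl fun a _ => ?_
  rw [show 2 ^ s a * (m a + 1) - 1 + 1 - 2 ^ s a * m a = ((2 ^ s a : ℕ) : ℤ) by push_cast; ring]
  exact Int.toNat_natCast _

theorem card_atomQ3 (m : Fin d → ℤ) : #(atomQ3 d s m) = 3 ^ d * #(atomQ d s m) := by
  simp only [card_atomQ, atomQ3, Pi.card_Icc, Int.card_Icc]
  rw [show 3 ^ d = ∏ _a : Fin d, 3 by simp, ← prod_mul_distrib]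
  refine prod_congr rfl fun a _ => ?_
  rw [show 2 ^ s a * (m a + 2) - 1 + 1 - 2 ^ s a * (m a - 1) = ((3 * 2 ^ s a : ℕ) : ℤ) by
    push_cast; ring]
  exact Int.toNat_natCast _

theorem card_Icc_sub_one_add_one (m : Fin d → ℤ) : #(Icc (m - 1) (m + 1)) = 3 ^ d := by
  simp only [Pi.card_Icc, Pi.sub_apply, Pi.add_apply, Pi.one_apply, Int.card_Icc]
  simp [show ∀ a, (m a + 1 + 1 - (m a - 1)).toNat = 3 by omega]

theorem tsum_eq_tsum_sum_atomQ (f : (Fin d → ℤ) → ℝ≥0∞) :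
    ∑' x, f x = ∑' m, ∑ y ∈ atomQ d s m, f y := by
  rw [← ENNReal.tsum_fiberwise f (index s)]
  refine tsum_congr fun m => ?_
  have hfiber : index s ⁻¹' {m} = ↑(atomQ d s m) := by
    ext x
    simp [mem_atomQ_iff]
  rw [hfiber, Finset.tsum_subtype']

noncomputable def discretization (s : Fin d → ℕ) (v : (Fin d → ℤ) → ℝ≥0∞) (x : Fin d → ℤ) :
    ℝ≥0∞ :=
  ∑' m, if x ∈ atomQ3 d s m then v m else 0

theorem discretization_eq_sum (v : (Fin d → ℤ) → ℝ≥0∞) (x : Fin d → ℤ) :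
    discretization s v x = ∑ m ∈ Icc (index s x - 1) (index s x + 1), v m := by
  simp only [discretization, mem_atomQ3_iff, tsum_ite_mem_finset]

variable {g v : (Fin d → ℤ) → ℝ≥0∞} {p : ℝ}

theorem tsum_rpow_le_mul_tsum_discretization {C : ℝ≥0∞} (hp : 0 ≤ p)
    (hdom : ∀ m, ∀ x ∈ atomQ d s m, g x ≤ C * ∑ m' ∈ Icc (m - 1) (m + 1), v m') :
    ∑' x, g x ^ p ≤ C ^ p * ∑' x, discretization s v x ^ p := by
  rw [← ENNReal.tsum_mul_left]
  refine ENNReal.tsum_le_tsum fun x => ?_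
  rw [← ENNReal.mul_rpow_of_nonneg _ _ hp, discretization_eq_sum]
  gcongr
  exact hdom _ x (mem_atomQ_iff.2 rfl)

theorem tsum_discretization_rpow_le (hp : 1 ≤ p) :
    ∑' x, discretization s v x ^ p ≤ (3 ^ d) ^ p * ∑' m, #(atomQ d s m) * v m ^ p := by
  have h3d : (3 ^ d : ℝ≥0∞) ^ (p - 1) * 3 ^ d = (3 ^ d) ^ p := by
    conv_rhs => rw [← sub_add_cancel p 1,
      ENNReal.rpow_add_of_nonneg _ _ (sub_nonneg.2 hp) zero_le_one, ENNReal.rpow_one]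
  calc ∑' x, discretization s v x ^ p
      ≤ ∑' x, (3 ^ d) ^ (p - 1) * discretization s (v · ^ p) x := by
        refine ENNReal.tsum_le_tsum fun x => ?_
        have := ENNReal.rpow_sum_le_const_mul_sum_rpow (Icc (index s x - 1) (index s x + 1)) v hp
        rwa [card_Icc_sub_one_add_one, Nat.cast_pow, Nat.cast_ofNat, ← discretization_eq_sum,
          ← discretization_eq_sum (v := (v · ^ p))] at this
    _ = (3 ^ d) ^ (p - 1) * ∑' m, #(atomQ3 d s m) * v m ^ p := by
        simp only [discretization, ENNReal.tsum_mul_left]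
        rw [ENNReal.tsum_comm]
        simp only [tsum_ite_mem_finset, sum_const, nsmul_eq_mul]
    _ = (3 ^ d) ^ p * ∑' m, #(atomQ d s m) * v m ^ p := by
        simp only [card_atomQ3, Nat.cast_mul, Nat.cast_pow, Nat.cast_ofNat, mul_assoc,
          ENNReal.tsum_mul_left]
        rw [← mul_assoc, h3d]

theorem tsum_card_atomQ_mul_rpow_le {c : ℝ≥0} (hc : c ≠ 0) (hp : 0 ≤ p)
    (hinf : ∀ m, ∃ X ⊆ atomQ d s m, (c : ℝ≥0∞) * #(atomQ d s m) ≤ #X ∧ ∀ y ∈ X, v m ≤ g y) :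
    ∑' m, #(atomQ d s m) * v m ^ p ≤ (c : ℝ≥0∞)⁻¹ * ∑' x, g x ^ p := by
  rw [tsum_eq_tsum_sum_atomQ (s := s) (fun x => g x ^ p), ← ENNReal.tsum_mul_left]
  refine ENNReal.tsum_le_tsum fun m => ?_
  obtain ⟨X, hXQ, hcard, hle⟩ := hinf m
  rw [← ENNReal.mul_le_iff_le_inv (by exact_mod_cast hc) ENNReal.coe_ne_top, ← mul_assoc]
  exact ENNReal.mul_card_mul_le_sum_of_le hXQ hcard fun y hy => by gcongr; exact hle y hy

theorem tsum_discretization_rpow_le_mul_tsum {c : ℝ≥0} (hc : c ≠ 0) (hp : 1 ≤ p)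
    (hinf : ∀ m, ∃ X ⊆ atomQ d s m, (c : ℝ≥0∞) * #(atomQ d s m) ≤ #X ∧ ∀ y ∈ X, v m ≤ g y) :
    ∑' x, discretization s v x ^ p ≤ (3 ^ d) ^ p * (c : ℝ≥0∞)⁻¹ * ∑' x, g x ^ p := by
  rw [mul_assoc]
  exact (tsum_discretization_rpow_le hp).trans
    (by gcongr; exact tsum_card_atomQ_mul_rpow_le hc (zero_le_one.trans hp) hinf)

end DyadicAtom

open DyadicAtom in
/-- Comparison of a function `g` with its discretization `∑_Q g(x_Q) 1_{3Q}` in `ℓ^p`,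
under the two structural hypotheses (local domination by neighboring centers, and a
large subset of each atom on which the center value is an infimum). -/
theorem stmt_7 (d : ℕ) (C₁ c₂ : NNReal) (hc₂ : 0 < c₂) (p : ℝ) (hp : 1 ≤ p) :
    ∃ C : ℝ≥0∞, 0 < C ∧ C ≠ ⊤ ∧
      ∀ (s : Fin d → ℕ) (g : (Fin d → ℤ) → NNReal) (ξ : (Fin d → ℤ) → (Fin d → ℤ)),
        (∀ m, ξ m ∈ atomQ d s m) →
        (∀ m, ∀ x ∈ atomQ d s m,
          g x ≤ C₁ * ∑ m' ∈ Finset.Icc (fun a => m a - 1) (fun a => m a + 1), g (ξ m')) →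
        (∀ m, ∃ Xq : Finset (Fin d → ℤ), Xq ⊆ atomQ d s m ∧
          (c₂ : ℝ) * (atomQ d s m).card ≤ Xq.card ∧ ∀ y ∈ Xq, g (ξ m) ≤ g y) →
        ((∑' x : Fin d → ℤ, ((g x : ℝ≥0∞)) ^ p) ≤
            C * ∑' x : Fin d → ℤ,
              (∑' m : Fin d → ℤ, if x ∈ atomQ3 d s m then (g (ξ m) : ℝ≥0∞) else 0) ^ p)
        ∧ ((∑' x : Fin d → ℤ,
              (∑' m : Fin d → ℤ, if x ∈ atomQ3 d s m then (g (ξ m) : ℝ≥0∞) else 0) ^ p) ≤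
            C * ∑' x : Fin d → ℤ, ((g x : ℝ≥0∞)) ^ p) := by
  refine ⟨(C₁ : ℝ≥0∞) ^ p + (3 ^ d) ^ p * (c₂ : ℝ≥0∞)⁻¹, ?_, ?_,
    fun s g ξ _ hdom hinf => ⟨?_, ?_⟩⟩
  · exact (ENNReal.mul_pos (by simp) (by simp)).trans_le le_add_self
  · have : (c₂ : ℝ≥0∞) ≠ 0 := by exact_mod_cast hc₂.ne'
    finiteness
  · refine (tsum_rpow_le_mul_tsum_discretization (s := s) (v := fun m => g (ξ m))
      (zero_le_one.trans hp) fun m x hx => ?_).trans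
      (mul_le_mul_left le_self_add _)
    exact_mod_cast hdom m x hx
  · refine (tsum_discretization_rpow_le_mul_tsum (v := fun m => g (ξ m)) hc₂.ne' hp
      fun m => ?_).trans (mul_le_mul_left le_add_self _)
    obtain ⟨X, hXQ, hcard, hle⟩ := hinf m
    exact ⟨X, hXQ, by exact_mod_cast hcard, fun y hy => by exact_mod_cast hle y hy⟩
end

section
/- Let $\{\tau_j\}$ be a (reverse) filtration of $\mathbb{Z}^d$ by partitions into dyadic rectangles, with conditional expectation $\mathbb{E}'_j$, maximal operator $\mathcal{M}f = \sup_j |\mathbb{E}'_j f|$, sharp function $\mathcal{M}^\# f(x) = \sup_j \sup_{x \in R \in \tau_j} \inf_a \frac{1}{|R|}\int_R |f - a|$, and enlarged maximal function $M' f(x) = \sup_j \sup_{x \in y + 5H_j'} \frac{1}{|5H_j'|}\int_{y+5H_j'}|f|$. Suppose $g : \mathbb{Z}^d \to [0,\infty)$ is a function of the form $g = \sum_k g_k$ where each $g_k$ is constant on atoms of $\sigma_k$, the 'local part' $\sum_{k \leq k'} g_k$ restricted to any $R \in \tau_j$ (with $j(k') < j \leq j(k'+1)$) depends only on $f \mathbf{1}_{5R}$,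 and the operator $f \mapsto (\sum_k g_k)^{1/2}$ is bounded on $L^2(\mathbb{Z}^d)$. Then $\mathcal{M}^\#(g)(x) \lesssim M'(f^2)(x)$ pointwise. -/
/-!
Fix an atom `R ∈ τ_j` containing `x`. Since `τ_j` refines `σ_k` whenever `j ≤ j(k)`, the terms
`S f k` with `j ≤ j(k)` are constant on `R`; their sum is the constant against which the
oscillation of `g` on `R` is measured, so the mean oscillation is at most the average over `R` of
the finitely many remaining terms, those with `j(k) < j`. On `R` these only see `f 1_{5R}`, so the
`L²` bound applied to `f 1_{5R}` controls their sum by `C ∑_{5R} f²`. As `|5R| = 5^d |R|` and `5R`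
is a translate of `5H_j` containing `x`, this is `5^d C` times an average dominated by `M'(f²)(x)`.
-/

open scoped ENNReal

/-- The atom `R = ∏_a [2^{e a j} m_a, 2^{e a j}(m_a+1))` of the partition `τ_j` of
`ℤ^d` into dyadic rectangles. -/
noncomputable def atomT (d : ℕ) (e : Fin d → ℕ → ℕ) (j : ℕ) (m : Fin d → ℤ) : Finset (Fin d → ℤ) :=
  Finset.Icc (fun a => 2 ^ (e a j) * m a) (fun a => 2 ^ (e a j) * (m a + 1) - 1)

/-- The `5`-fold dilate `5R` of the atom `R`. -/
noncomputable def atomT5 (d : ℕ) (e : Fin d → ℕ → ℕ) (j : ℕ) (m : Fin d → ℤ) : Finset (Fin d → ℤ) :=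
  Finset.Icc (fun a => 2 ^ (e a j) * (m a - 2)) (fun a => 2 ^ (e a j) * (m a + 3) - 1)

/-- A translate `y + 5H_j'` of the `5`-dilated basic rectangle at scale `j`. -/
noncomputable def transl5 (d : ℕ) (e : Fin d → ℕ → ℕ) (j : ℕ) (y : Fin d → ℤ) : Finset (Fin d → ℤ) :=
  Finset.Icc y (fun a => y a + 5 * 2 ^ (e a j) - 1)

/-- The dyadic sharp maximal function associated to the filtration `{τ_j}`. -/
noncomputable def sharpMax (d : ℕ) (e : Fin d → ℕ → ℕ) (g : (Fin d → ℤ) → ℝ≥0∞)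
    (x : Fin d → ℤ) : ℝ≥0∞ :=
  ⨆ (j : ℕ) (m : Fin d → ℤ) (_ : x ∈ atomT d e j m), ⨅ a : ℝ≥0∞,
    ((atomT d e j m).card : ℝ≥0∞)⁻¹ *
      ∑ z ∈ atomT d e j m, ((g z - a) + (a - g z))

/-- The enlarged maximal function `M' h(x) = sup_j sup_{x ∈ y+5H_j'} avg_{y+5H_j'} h`. -/
noncomputable def bigM5 (d : ℕ) (e : Fin d → ℕ → ℕ) (h : (Fin d → ℤ) → ℝ≥0∞)
    (x : Fin d → ℤ) : ℝ≥0∞ :=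
  ⨆ (j : ℕ) (y : Fin d → ℤ) (_ : x ∈ transl5 d e j y),
    ((transl5 d e j y).card : ℝ≥0∞)⁻¹ * ∑ z ∈ transl5 d e j y, h z

theorem Int.Icc_mul_subset_Icc_mul_ediv {s t : ℤ} (hs : 0 < s) (ht : 0 < t) (m : ℤ) :
    Set.Icc (s * m) (s * (m + 1) - 1) ⊆ Set.Icc (s * t * (m / t)) (s * t * (m / t + 1) - 1) := by
  have hlo : t * (m / t) ≤ m := Int.mul_ediv_self_le ht.ne'
  have hhi : m + 1 ≤ t * (m / t + 1) := by
    have := Int.lt_mul_ediv_self_add (x := m) ht; linarith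
  rintro z ⟨hz₁, hz₂⟩
  constructor <;> nlinarith

theorem atomT_subset_atomT_of_le (d : ℕ) (e : Fin d → ℕ → ℕ) (hmono : ∀ a, Monotone (e a))
    {j j' : ℕ} (hjj : j ≤ j') (m : Fin d → ℤ) :
    ∃ m', atomT d e j m ⊆ atomT d e j' m' := by
  refine ⟨fun a => m a / 2 ^ (e a j' - e a j), fun z hz => ?_⟩
  simp only [atomT, Finset.mem_Icc, Pi.le_def] at hz ⊢
  have hpow : ∀ a, (2 : ℤ) ^ e a j' = 2 ^ e a j * 2 ^ (e a j' - e a j) := fun a => by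
    rw [← pow_add, Nat.add_sub_cancel' (hmono a hjj)]
  have key := fun a => Int.Icc_mul_subset_Icc_mul_ediv (s := 2 ^ e a j) (t := 2 ^ (e a j' - e a j))
    (by positivity) (by positivity) (m a) ⟨hz.1 a, hz.2 a⟩
  exact ⟨fun a => hpow a ▸ (key a).1, fun a => hpow a ▸ (key a).2⟩

theorem card_atomT5 (d : ℕ) (e : Fin d → ℕ → ℕ) (j : ℕ) (m : Fin d → ℤ) :
    (atomT5 d e j m).card = 5 ^ d * (atomT d e j m).card := by
  simp only [atomT, atomT5, Pi.card_Icc, Int.card_Icc]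
  rw [← Fin.prod_const, ← Finset.prod_mul_distrib]
  refine Finset.prod_congr rfl fun a _ => ?_
  rw [show 2 ^ e a j * (m a + 3) - 1 + 1 - 2 ^ e a j * (m a - 2) = 5 * 2 ^ e a j by ring,
    show 2 ^ e a j * (m a + 1) - 1 + 1 - 2 ^ e a j * m a = 2 ^ e a j by ring]
  omega

theorem inv_card_atomT (d : ℕ) (e : Fin d → ℕ → ℕ) (j : ℕ) (m : Fin d → ℤ) :
    ((atomT d e j m).card : ℝ≥0∞)⁻¹ = 5 ^ d * ((atomT5 d e j m).card : ℝ≥0∞)⁻¹ := by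
  have h0 : (5 : ℝ≥0∞) ^ d ≠ 0 := by positivity
  have htop : (5 : ℝ≥0∞) ^ d ≠ ⊤ := by simp
  rw [card_atomT5, Nat.cast_mul, Nat.cast_pow, Nat.cast_ofNat,
    ENNReal.mul_inv (.inl h0) (.inl htop), ← mul_assoc, ENNReal.mul_inv_cancel h0 htop, one_mul]

theorem atomT_subset_atomT5 (d : ℕ) (e : Fin d → ℕ → ℕ) (j : ℕ) (m : Fin d → ℤ) :
    atomT d e j m ⊆ atomT5 d e j m := by
  refine Finset.Icc_subset_Icc (fun a => ?_) (fun a => ?_) <;>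
  · have : (0 : ℤ) < 2 ^ e a j := by positivity
    dsimp only; nlinarith

theorem atomT5_eq_transl5 (d : ℕ) (e : Fin d → ℕ → ℕ) (j : ℕ) (m : Fin d → ℤ) :
    atomT5 d e j m = transl5 d e j (fun a => 2 ^ e a j * (m a - 2)) := by
  unfold atomT5 transl5
  congr 1; funext a; ring

theorem avg_atomT5_le_bigM5 (d : ℕ) (e : Fin d → ℕ → ℕ) (h : (Fin d → ℤ) → ℝ≥0∞)
    {x : Fin d → ℤ} {j : ℕ} {m : Fin d → ℤ} (hx : x ∈ atomT d e j m) :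
    ((atomT5 d e j m).card : ℝ≥0∞)⁻¹ * ∑ z ∈ atomT5 d e j m, h z ≤ bigM5 d e h x := by
  rw [atomT5_eq_transl5]
  exact le_iSup_of_le j <| le_iSup_of_le _ <|
    le_iSup_of_le (atomT5_eq_transl5 d e j m ▸ atomT_subset_atomT5 d e j m hx) le_rfl

theorem StrictMono.exists_lt_iff_lt {φ : ℕ → ℕ} (hφ : StrictMono φ) (j : ℕ) :
    ∃ n, ∀ k, φ k < j ↔ k < n := by
  have hex : ∃ k, j ≤ φ k := ⟨j, hφ.le_apply⟩
  refine ⟨Nat.find hex, fun k => ⟨fun hk => ?_, fun hk => not_le.1 (Nat.find_min hex hk)⟩⟩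
  by_contra! hle
  exact (Nat.find_spec hex).not_gt (hk.trans_le' (hφ.monotone hle))

theorem ENNReal.tsum_tsub_add_tsub_tsum_le (G : ℕ → ℝ≥0∞) (n : ℕ) :
    (∑' k, G k - ∑' i, G (i + n)) + (∑' i, G (i + n) - ∑' k, G k) ≤
      ∑ k ∈ Finset.range n, G k := by
  rw [← ENNReal.summable.sum_add_tsum_nat_add', tsub_eq_zero_of_le le_add_self, add_zero]
  exact add_tsub_le_right

theorem ENNReal.tsum_ofReal_indicator_sq {α : Type*} (s : Finset α) (f : α → ℝ) :
    ∑' z, ENNReal.ofReal ((s : Set α).indicator f z ^ 2) = ∑ z ∈ s, ENNReal.ofReal (f z ^ 2) := by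
  rw [tsum_eq_sum (s := s) fun z hz => by simp [hz]]
  exact Finset.sum_congr rfl fun z hz => by simp [hz]

theorem sum_atomT_local_le (d : ℕ) (e : Fin d → ℕ → ℕ) (jk : ℕ → ℕ)
    (S : ((Fin d → ℤ) → ℝ) → ℕ → (Fin d → ℤ) → ℝ≥0∞) (C : ℝ≥0∞)
    (hlocal : ∀ (j k' : ℕ), jk k' < j → j ≤ jk (k' + 1) → ∀ m (f₁ f₂ : (Fin d → ℤ) → ℝ),
      (∀ x ∈ atomT5 d e j m, f₁ x = f₂ x) →
      ∀ x ∈ atomT d e j m, ∀ k ≤ k', S f₁ k x = S f₂ k x)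
    (hL2 : ∀ f : (Fin d → ℤ) → ℝ,
      (∑' x : Fin d → ℤ, ∑' k : ℕ, S f k x) ≤
        C * ∑' x : Fin d → ℤ, ENNReal.ofReal (f x ^ 2))
    {j n : ℕ} (hn : ∀ k, jk k < j ↔ k < n) (f : (Fin d → ℤ) → ℝ) (m : Fin d → ℤ) :
    ∑ z ∈ atomT d e j m, ∑ k ∈ Finset.range n, S f k z ≤
      C * ∑ z ∈ atomT5 d e j m, ENNReal.ofReal (f z ^ 2) := by
  rcases n with _ | k'
  · simp
  have hk' : jk k' < j := (hn k').2 k'.lt_succ_self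
  have hk'1 : j ≤ jk (k' + 1) := not_lt.1 ((hn _).not.2 (lt_irrefl _))
  set f₅ := (atomT5 d e j m : Set (Fin d → ℤ)).indicator f
  calc ∑ z ∈ atomT d e j m, ∑ k ∈ Finset.range (k' + 1), S f k z
      = ∑ z ∈ atomT d e j m, ∑ k ∈ Finset.range (k' + 1), S f₅ k z :=
        Finset.sum_congr rfl fun z hz => Finset.sum_congr rfl fun k hk =>
          hlocal j k' hk' hk'1 m f f₅ (fun w hw => (Set.indicator_of_mem hw f).symm) z hz k
            (Nat.lt_succ_iff.1 (Finset.mem_range.1 hk))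
    _ ≤ ∑' z, ∑' k, S f₅ k z :=
        (Finset.sum_le_sum fun z _ => ENNReal.sum_le_tsum _).trans (ENNReal.sum_le_tsum _)
    _ ≤ C * ∑' z, ENNReal.ofReal (f₅ z ^ 2) := hL2 f₅
    _ = C * ∑ z ∈ atomT5 d e j m, ENNReal.ofReal (f z ^ 2) := by
        rw [ENNReal.tsum_ofReal_indicator_sq]

/-- Sharp function bound for the (square of the) discretized square function: if
`g = ∑_k S f k` with `S f k` constant on atoms of `σ_k = τ_{j(k)}`, the local part
depending only on `f 1_{5R}`, and `f ↦ ∑_k S f k` bounded `L^2 → L^1`-square style,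
then `M^♯(g) ≲ M'(f²)` pointwise. -/
theorem stmt_10 (d : ℕ) (e : Fin d → ℕ → ℕ) (hmono : ∀ a, Monotone (e a))
    (jk : ℕ → ℕ) (hjk : StrictMono jk)
    (S : ((Fin d → ℤ) → ℝ) → ℕ → (Fin d → ℤ) → ℝ≥0∞)
    (C : ℝ≥0∞) (hC : C ≠ ⊤)
    (hconst : ∀ f k m, ∀ x ∈ atomT d e (jk k) m, ∀ y ∈ atomT d e (jk k) m,
      S f k x = S f k y)
    (hlocal : ∀ (j k' : ℕ), jk k' < j → j ≤ jk (k' + 1) → ∀ m (f₁ f₂ : (Fin d → ℤ) → ℝ),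
      (∀ x ∈ atomT5 d e j m, f₁ x = f₂ x) →
      ∀ x ∈ atomT d e j m, ∀ k ≤ k', S f₁ k x = S f₂ k x)
    (hL2 : ∀ f : (Fin d → ℤ) → ℝ,
      (∑' x : Fin d → ℤ, ∑' k : ℕ, S f k x) ≤
        C * ∑' x : Fin d → ℤ, ENNReal.ofReal (f x ^ 2)) :
    ∃ C' : ℝ≥0∞, C' ≠ ⊤ ∧ ∀ (f : (Fin d → ℤ) → ℝ) (x : Fin d → ℤ),
      sharpMax d e (fun z => ∑' k : ℕ, S f k z) x ≤
        C' * bigM5 d e (fun z => ENNReal.ofReal (f z ^ 2)) x := by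
  refine ⟨5 ^ d * C, ENNReal.mul_ne_top (by simp) hC, fun f x => ?_⟩
  refine iSup_le fun j => iSup₂_le fun m hx => ?_
  obtain ⟨n, hn⟩ := hjk.exists_lt_iff_lt j
  have htail : ∀ z ∈ atomT d e j m, ∀ i, S f (i + n) z = S f (i + n) x := fun z hz i => by
    have hj : j ≤ jk (i + n) := not_lt.1 ((hn (i + n)).not.2 (by omega))
    obtain ⟨m', hR⟩ := atomT_subset_atomT_of_le d e hmono hj m
    exact hconst f _ m' z (hR hz) x (hR hx)
  set a := ∑' i, S f (i + n) x
  have hosc : ∀ z ∈ atomT d e j m, ((∑' k, S f k z) - a) + (a - ∑' k, S f k z) ≤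
      ∑ k ∈ Finset.range n, S f k z := fun z hz => by
    have := ENNReal.tsum_tsub_add_tsub_tsum_le (fun k => S f k z) n
    rwa [tsum_congr (htail z hz)] at this
  calc _ ≤ ((atomT d e j m).card : ℝ≥0∞)⁻¹ *
        ∑ z ∈ atomT d e j m, (((∑' k, S f k z) - a) + (a - ∑' k, S f k z)) := iInf_le _ a
    _ ≤ ((atomT d e j m).card : ℝ≥0∞)⁻¹ *
        (C * ∑ z ∈ atomT5 d e j m, ENNReal.ofReal (f z ^ 2)) := by
      gcongr
      exact (Finset.sum_le_sum hosc).trans (sum_atomT_local_le d e jk S C hlocal hL2 hn f m)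
    _ = 5 ^ d * C * (((atomT5 d e j m).card : ℝ≥0∞)⁻¹ *
        ∑ z ∈ atomT5 d e j m, ENNReal.ofReal (f z ^ 2)) := by
      rw [inv_card_atomT]; ring
    _ ≤ _ := by gcongr; exact avg_atomT5_le_bigM5 d e _ hx
end

section
/- Let $S$ be a sublinear operator on $\ell^2(\mathbb{Z}^d)$ of the form $Sf = (\sum_k |S_k f|^2)^{1/2}$, where each $S_k f$ is constant on atoms $Q$ of a partition $\sigma_k$ of $\mathbb{Z}^d$ into congruent rectangles, taking value $c_{k,Q}(f) \geq 0$ on $Q$. Suppose that the value $c_{k,Q}(f)$ depends only on the restriction of $f$ to the set $\{M_{HL} w \gtrsim_d 2^j\}$ whenever $2^j < w(3Q)/|3Q| \leq 2^{j+1}$ (in the sense that $c_{k,Q}(f) = c_{k,Q}(f \cdot \mathbf{1}_{\{M_{HL} w \gtrsim_d 2^j\}})$, as follows from $c_{k,Q}$ depending only on $f|_{5Q}$ and $5Q \subset \{M_{HL}w \gtrsim_d 2^j\}$), and that $\|Sf\|_{\ell^2} \leq C_0\|f\|_{\ell^2}$. Then for every nonnegative weight $w$, $\sum_{x} |Sf(x)|^2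 w(x) \leq C \sum_x |f(x)|^2 M_{HL}w(x)$, with $C$ depending only on $C_0$ and $d$. -/
open scoped ENNReal NNReal

/-- The index of the atom of the partition with side exponents `s` containing `x`. -/
def atomIdx (d : ℕ) (s : Fin d → ℕ) (x : Fin d → ℤ) : Fin d → ℤ :=
  fun a => Int.fdiv (x a) (2 ^ (s a))

/-- The discrete cube `∏_a [y_a, y_a + n]`. -/
noncomputable def cubeU (d : ℕ) (y : Fin d → ℤ) (n : ℕ) : Finset (Fin d → ℤ) :=
  Finset.Icc y (fun a => y a + n)

/-- The uncentered cubic Hardy–Littlewood maximal function on `ℤ^d`. -/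
noncomputable def MHL (d : ℕ) (w : (Fin d → ℤ) → ℝ≥0∞) (x : Fin d → ℤ) : ℝ≥0∞ :=
  ⨆ (y : Fin d → ℤ) (n : ℕ) (_ : x ∈ cubeU d y n),
    ((cubeU d y n).card : ℝ≥0∞)⁻¹ * ∑ z ∈ cubeU d y n, w z

/-! Sort the atoms `Q` by the dyadic level `j` of the average of `w` over `3Q`, so that
`w(Q) ≤ w(3Q) ≤ 2^(j+1) 3^d |Q|`; on such an atom the localization hypothesis replaces `f` by
its truncation `f_j = f · 1_{δ 2^j ≤ M_{HL} w}`. Summing over all levels and applying the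
unweighted bound to each `f_j` leaves `∑_x f(x)² ∑_j 2^(j+1) 1_{δ 2^j ≤ M_{HL} w(x)}`, and this
dyadic sum is at most `4 δ⁻¹ M_{HL} w(x)`. -/

section Atoms

variable {d : ℕ} (s : Fin d → ℕ)

lemma mem_atomQ_iff (m x : Fin d → ℤ) : x ∈ atomQ d s m ↔ atomIdx d s x = m := by
  simp only [atomQ, Finset.mem_Icc, atomIdx, funext_iff, Pi.le_def, ← forall_and]
  refine forall_congr' fun a => ?_
  have hpos : (0 : ℤ) < 2 ^ s a := by positivity
  rw [Int.fdiv_eq_ediv_of_nonneg _ hpos.le, le_antisymm_iff,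
    ← Int.lt_add_one_iff (a := x a / 2 ^ s a), Int.ediv_lt_iff_lt_mul hpos,
    Int.le_ediv_iff_mul_le hpos]
  constructor <;> rintro ⟨h₁, h₂⟩ <;> constructor <;> linarith

lemma atomQ_nonempty (m : Fin d → ℤ) : (atomQ d s m).Nonempty :=
  Finset.nonempty_Icc.2 fun a => by
    dsimp only; nlinarith [pow_pos (show (0 : ℤ) < 2 by norm_num) (s a)]

lemma atomQ_subset_atomQ3 (m : Fin d → ℤ) : atomQ d s m ⊆ atomQ3 d s m := by
  apply Finset.Icc_subset_Icc <;> intro a <;> dsimp only <;>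
    nlinarith [pow_pos (show (0 : ℤ) < 2 by norm_num) (s a)]

lemma card_atomQ3 (m : Fin d → ℤ) : (atomQ3 d s m).card = 3 ^ d * (atomQ d s m).card := by
  have hside : ∀ (l u : ℤ) (n : ℕ), u + 1 - l = n → (Finset.Icc l u).card = n := by
    intro l u n h; rw [Int.card_Icc, h, Int.toNat_natCast]
  rw [atomQ3, atomQ, Pi.card_Icc, Pi.card_Icc, ← Fin.prod_const, ← Finset.prod_mul_distrib]
  refine Finset.prod_congr rfl fun a _ => ?_
  rw [hside _ _ (3 * 2 ^ s a) (by push_cast; ring), hside _ _ (2 ^ s a) (by push_cast; ring)]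

lemma tsum_eq_tsum_sum_atomQ (G : (Fin d → ℤ) → ℝ≥0∞) :
    ∑' x, G x = ∑' m, ∑ x ∈ atomQ d s m, G x := by
  rw [← ENNReal.tsum_fiberwise G (atomIdx d s)]
  refine tsum_congr fun m => ?_
  have hfiber : atomIdx d s ⁻¹' {m} = ↑(atomQ d s m) := by
    ext x; simp [mem_atomQ_iff]
  rw [hfiber, Finset.tsum_subtype']

lemma tsum_comp_atomIdx_mul (F u : (Fin d → ℤ) → ℝ≥0∞) :
    ∑' x, F (atomIdx d s x) * u x = ∑' m, F m * ∑ x ∈ atomQ d s m, u x := by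
  rw [tsum_eq_tsum_sum_atomQ s]
  refine tsum_congr fun m => ?_
  rw [Finset.mul_sum]
  exact Finset.sum_congr rfl fun x hx => by rw [(mem_atomQ_iff s m x).1 hx]

lemma tsum_comp_atomIdx (F : (Fin d → ℤ) → ℝ≥0∞) :
    ∑' x, F (atomIdx d s x) = ∑' m, F m * (atomQ d s m).card := by
  simpa using tsum_comp_atomIdx_mul s F 1

end Atoms

lemma tsum_ite_le_two_zpow (n : ℤ) :
    ∑' j : ℤ, (if j ≤ n then (2 : ℝ≥0∞) ^ j else 0) = 2 ^ (n + 1) := by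
  have h2 : (2 : ℝ≥0∞) ≠ 0 := two_ne_zero
  have h2t : (2 : ℝ≥0∞) ≠ ⊤ := ENNReal.ofNat_ne_top
  have hinj : Function.Injective fun i : ℕ => n - i := fun a b h => by simpa using h
  have hsupp : Function.support (fun j : ℤ => if j ≤ n then (2 : ℝ≥0∞) ^ j else 0) ⊆
      Set.range fun i : ℕ => n - i := fun j hj =>
    ⟨(n - j).toNat, by grind [Function.mem_support]⟩
  rw [← hinj.tsum_eq hsupp]
  simp only [sub_le_self_iff, Nat.cast_nonneg, if_true, ENNReal.zpow_sub h2 h2t, zpow_natCast,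
    ENNReal.tsum_mul_left]
  simp_rw [ENNReal.inv_pow]
  rw [ENNReal.tsum_geometric, ENNReal.one_sub_inv_two, inv_inv, ENNReal.zpow_add h2 h2t, zpow_one]

lemma tsum_ite_mul_two_zpow_le {δ : ℝ≥0∞} (hδ : δ ≠ 0) (hδ' : δ ≠ ⊤) (A : ℝ≥0∞) :
    ∑' j : ℤ, (if δ * 2 ^ j ≤ A then (2 : ℝ≥0∞) ^ (j + 1) else 0) ≤ 4 * δ⁻¹ * A := by
  have h2 : (2 : ℝ≥0∞) ≠ 0 := two_ne_zero
  have h2t : (2 : ℝ≥0∞) ≠ ⊤ := ENNReal.ofNat_ne_top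
  rcases eq_or_ne A ⊤ with rfl | hA
  · simp [ENNReal.mul_top, hδ']
  rcases eq_or_ne A 0 with rfl | hA0
  · simp [hδ, (ENNReal.zpow_pos h2 h2t _).ne']
  obtain ⟨n, hn_le, hlt_n⟩ := ENNReal.exists_mem_Ico_zpow (ENNReal.div_pos hA0 hδ').ne'
    (ENNReal.div_lt_top hA hδ).ne (by norm_num) h2t
  have hlevel : ∀ j : ℤ, δ * 2 ^ j ≤ A → j ≤ n := fun j hj => by
    by_contra! hnj
    rw [mul_comm, ← ENNReal.le_div_iff_mul_le (.inl hδ) (.inl hδ')] at hj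
    exact (ENNReal.zpow_le_of_le (by norm_num) (by omega)).trans hj |>.not_gt hlt_n
  calc ∑' j : ℤ, (if δ * 2 ^ j ≤ A then (2 : ℝ≥0∞) ^ (j + 1) else 0)
      ≤ ∑' j : ℤ, 2 * (if j ≤ n then (2 : ℝ≥0∞) ^ j else 0) := by
        refine ENNReal.tsum_le_tsum fun j => ?_
        by_cases hAj : δ * 2 ^ j ≤ A
        · rw [if_pos hAj, if_pos (hlevel j hAj), ENNReal.zpow_add h2 h2t, zpow_one, mul_comm]
        · rw [if_neg hAj]
          exact zero_le
    _ = 4 * 2 ^ n := by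
        rw [ENNReal.tsum_mul_left, tsum_ite_le_two_zpow, ENNReal.zpow_add h2 h2t, zpow_one]; ring
    _ ≤ 4 * (A / δ) := by gcongr
    _ = 4 * δ⁻¹ * A := by rw [div_eq_mul_inv]; ring

lemma tsum_two_zpow_mul_tsum_truncation_le {α : Type*} {δ : ℝ≥0∞} (hδ : δ ≠ 0) (hδ' : δ ≠ ⊤)
    (M : α → ℝ≥0∞) (f : α → ℝ≥0) :
    ∑' j : ℤ, 2 ^ (j + 1) * ∑' x, ((if δ * 2 ^ j ≤ M x then f x else 0 : ℝ≥0) : ℝ≥0∞) ^ 2 ≤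
      4 * δ⁻¹ * ∑' x, (f x : ℝ≥0∞) ^ 2 * M x := by
  calc ∑' j : ℤ, 2 ^ (j + 1) * ∑' x, ((if δ * 2 ^ j ≤ M x then f x else 0 : ℝ≥0) : ℝ≥0∞) ^ 2
      = ∑' x, (f x : ℝ≥0∞) ^ 2 *
          ∑' j : ℤ, (if δ * 2 ^ j ≤ M x then (2 : ℝ≥0∞) ^ (j + 1) else 0) := by
        simp_rw [← ENNReal.tsum_mul_left]
        rw [ENNReal.tsum_comm]
        refine tsum_congr fun x => tsum_congr fun j => ?_
        split_ifs <;> simp [mul_comm]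
    _ ≤ ∑' x, (f x : ℝ≥0∞) ^ 2 * (4 * δ⁻¹ * M x) := by
        gcongr with x
        exact tsum_ite_mul_two_zpow_le hδ hδ' _
    _ = 4 * δ⁻¹ * ∑' x, (f x : ℝ≥0∞) ^ 2 * M x := by
        rw [← ENNReal.tsum_mul_left]
        exact tsum_congr fun x => by ring

noncomputable def avgQ3 (d : ℕ) (s : Fin d → ℕ) (w : (Fin d → ℤ) → ℝ≥0∞) (m : Fin d → ℤ) :
    ℝ≥0∞ :=
  (∑ x ∈ atomQ3 d s m, w x) / (atomQ3 d s m).card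

lemma mul_sum_atomQ_le_tsum {d : ℕ} (s : Fin d → ℕ) (m : Fin d → ℤ) {w : (Fin d → ℤ) → ℝ≥0∞}
    (hw : ∀ x, w x ≠ ⊤) {a : ℝ≥0∞} {b : ℤ → ℝ≥0∞}
    (hab : ∀ j : ℤ, 2 ^ j < avgQ3 d s w m → avgQ3 d s w m ≤ 2 ^ (j + 1) → a = b j) :
    a * ∑ x ∈ atomQ d s m, w x ≤ ∑' j : ℤ, 2 ^ (j + 1) * 3 ^ d * (b j * (atomQ d s m).card) := by
  have hcard3 : ((atomQ3 d s m).card : ℝ≥0∞) ≠ 0 :=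
    Nat.cast_ne_zero.2 ((atomQ_nonempty s m).mono (atomQ_subset_atomQ3 s m)).card_pos.ne'
  have hQ : ∑ x ∈ atomQ d s m, w x ≤ avgQ3 d s w m * (3 ^ d * (atomQ d s m).card) := by
    have hcard : ((atomQ3 d s m).card : ℝ≥0∞) = 3 ^ d * (atomQ d s m).card := by
      rw [card_atomQ3]; push_cast; rfl
    rw [← hcard, avgQ3, ENNReal.div_mul_cancel hcard3 (ENNReal.natCast_ne_top _)]
    exact Finset.sum_le_sum_of_subset (atomQ_subset_atomQ3 s m)
  rcases eq_or_ne (avgQ3 d s w m) 0 with hA0 | hA0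
  · rw [hA0, zero_mul, nonpos_iff_eq_zero] at hQ
    rw [hQ, mul_zero]
    exact zero_le
  have hAt : avgQ3 d s w m ≠ ⊤ :=
    ENNReal.div_ne_top (ENNReal.sum_ne_top.2 fun x _ => hw x) hcard3
  obtain ⟨j, hjA, hAj⟩ := ENNReal.exists_mem_Ioc_zpow (y := 2) hA0 hAt (by norm_num) (by norm_num)
  calc a * ∑ x ∈ atomQ d s m, w x ≤ b j * (2 ^ (j + 1) * (3 ^ d * (atomQ d s m).card)) := by
        rw [hab j hjA hAj]
        gcongr
        exact hQ.trans (by gcongr)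
    _ = 2 ^ (j + 1) * 3 ^ d * (b j * (atomQ d s m).card) := by ring
    _ ≤ _ := ENNReal.le_tsum j

lemma tsum_sq_mul_le_tsum_levels {d : ℕ} (s : ℕ → Fin d → ℕ) {w : (Fin d → ℤ) → ℝ≥0∞}
    (hw : ∀ x, w x ≠ ⊤) (a : ℕ → (Fin d → ℤ) → ℝ≥0∞) (b : ℤ → ℕ → (Fin d → ℤ) → ℝ≥0∞)
    (hab : ∀ k m j, 2 ^ j < avgQ3 d (s k) w m → avgQ3 d (s k) w m ≤ 2 ^ (j + 1) →
      a k m = b j k m) :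
    ∑' x, (∑' k, a k (atomIdx d (s k) x) ^ 2) * w x ≤
      ∑' j : ℤ, 2 ^ (j + 1) * 3 ^ d * ∑' x, ∑' k, b j k (atomIdx d (s k) x) ^ 2 := by
  calc ∑' x, (∑' k, a k (atomIdx d (s k) x) ^ 2) * w x
      = ∑' k, ∑' m, a k m ^ 2 * ∑ x ∈ atomQ d (s k) m, w x := by
        simp_rw [← ENNReal.tsum_mul_right]
        rw [ENNReal.tsum_comm]
        exact tsum_congr fun k => tsum_comp_atomIdx_mul (s k) (fun m => a k m ^ 2) w
    _ ≤ ∑' k, ∑' m, ∑' j : ℤ, 2 ^ (j + 1) * 3 ^ d * (b j k m ^ 2 * (atomQ d (s k) m).card) :=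
        ENNReal.tsum_le_tsum fun k => ENNReal.tsum_le_tsum fun m =>
          mul_sum_atomQ_le_tsum (s k) m hw fun j h₁ h₂ => by rw [hab k m j h₁ h₂]
    _ = ∑' j : ℤ, 2 ^ (j + 1) * 3 ^ d * ∑' x, ∑' k, b j k (atomIdx d (s k) x) ^ 2 := by
        simp_rw [ENNReal.tsum_comm (β := ℤ), ENNReal.tsum_mul_left]
        refine tsum_congr fun j => congrArg _ ?_
        rw [ENNReal.tsum_comm (α := Fin d → ℤ)]
        exact tsum_congr fun k => (tsum_comp_atomIdx (s k) fun m => b j k m ^ 2).symm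

/-- Weighted `ℓ²` estimate `∫ |Sf|² w ≲ ∫ |f|² M_{HL} w` for a square function
`Sf = (∑_k |S_k f|²)^{1/2}` whose atomic values localize to the sets
`{M_{HL} w ≳ 2^j}` at weight-density level `2^j`, given the unweighted `ℓ²` bound. -/
theorem stmt_12 (d : ℕ) (C₀ : ℝ≥0∞) (hC₀ : C₀ ≠ ⊤) (δ : ℝ≥0∞) (hδ : 0 < δ) (hδ' : δ ≠ ⊤) :
    ∃ C : ℝ≥0∞, C ≠ ⊤ ∧
      ∀ (s : ℕ → Fin d → ℕ)
        (c : ℕ → (Fin d → ℤ) → ((Fin d → ℤ) → ℝ≥0) → ℝ≥0∞)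
        (w : (Fin d → ℤ) → ℝ≥0∞), (∀ x, w x ≠ ⊤) →
        (∀ (k : ℕ) (m : Fin d → ℤ) (j : ℤ) (f : (Fin d → ℤ) → ℝ≥0),
          (2:ℝ≥0∞) ^ j <
              (∑ x ∈ atomQ3 d (s k) m, w x) / ((atomQ3 d (s k) m).card : ℝ≥0∞) →
          (∑ x ∈ atomQ3 d (s k) m, w x) / ((atomQ3 d (s k) m).card : ℝ≥0∞) ≤
              (2:ℝ≥0∞) ^ (j + 1) →
          c k m f = c k m (fun x => if δ * (2:ℝ≥0∞) ^ j ≤ MHL d w x then f x else 0)) →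
        (∀ f : (Fin d → ℤ) → ℝ≥0,
          (∑' x : Fin d → ℤ, ∑' k : ℕ, (c k (atomIdx d (s k) x) f) ^ 2) ≤
            C₀ * ∑' x : Fin d → ℤ, ((f x : ℝ≥0∞)) ^ 2) →
        ∀ f : (Fin d → ℤ) → ℝ≥0,
          (∑' x : Fin d → ℤ, (∑' k : ℕ, (c k (atomIdx d (s k) x) f) ^ 2) * w x) ≤
            C * ∑' x : Fin d → ℤ, ((f x : ℝ≥0∞)) ^ 2 * MHL d w x := by
  refine ⟨3 ^ d * C₀ * (4 * δ⁻¹), by finiteness [hδ.ne'], ?_⟩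
  intro s c w hw hloc hC f
  calc ∑' x, (∑' k, c k (atomIdx d (s k) x) f ^ 2) * w x
      ≤ ∑' j : ℤ, 2 ^ (j + 1) * 3 ^ d * ∑' x, ∑' k,
          c k (atomIdx d (s k) x) (fun y => if δ * 2 ^ j ≤ MHL d w y then f y else 0) ^ 2 :=
        tsum_sq_mul_le_tsum_levels s hw _ _ fun k m j => hloc k m j f
    _ ≤ ∑' j : ℤ, 2 ^ (j + 1) * 3 ^ d *
          (C₀ * ∑' x, ((if δ * 2 ^ j ≤ MHL d w x then f x else 0 : ℝ≥0) : ℝ≥0∞) ^ 2) := by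
        gcongr with j
        exact hC _
    _ = 3 ^ d * C₀ * ∑' j : ℤ, 2 ^ (j + 1) *
          ∑' x, ((if δ * 2 ^ j ≤ MHL d w x then f x else 0 : ℝ≥0) : ℝ≥0∞) ^ 2 := by
        rw [← ENNReal.tsum_mul_left]
        exact tsum_congr fun j => by ring
    _ ≤ 3 ^ d * C₀ * (4 * δ⁻¹ * ∑' x, (f x : ℝ≥0∞) ^ 2 * MHL d w x) := by
        gcongr
        exact tsum_two_zpow_mul_tsum_truncation_le hδ.ne' hδ' _ f
    _ = 3 ^ d * C₀ * (4 * δ⁻¹) * ∑' x, (f x : ℝ≥0∞) ^ 2 * MHL d w x := by ring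
end

section
/- Let $\mathcal{A} = \{E_t\}$ be a family of finite sets in $\mathbb{Z}^d$ with $E_t \subset H_k$ and $c|H_k| \leq |E_t|$ whenever $2^k \leq t < 2^{k+1}$, where $H_k$ are symmetric dyadic rectangles and $E_t \subset E_{t'}$ for $2^k \leq t \leq t' < 2^{k+1}$. Define $A_t f := \chi_{E_t} * f$ with $\chi_{E} = \frac{1}{|E|}\mathbf{1}_E$. Then the short square function over scale $k$ satisfies the pointwise bound $\mathfrak{s}_k^S f(x) := \sup_{t_i \text{ increasing}} \big(\sum_{2^k \leq t_i < 2^{k+1}} |(A_{t_i} - A_{t_{i+1}})f(x)|^2\big)^{1/2} \leq C(c,d)\, \chi_{H_k} * |f|(x)$. -/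
/-- The symmetric dyadic rectangle `H_k = ∏_a [-2^{e a}, 2^{e a})` as a finset. -/
noncomputable def HrectF (d : ℕ) (e : Fin d → ℕ) : Finset (Fin d → ℤ) :=
  Finset.Icc (fun a => -(2 ^ (e a) : ℤ)) (fun a => (2 ^ (e a) : ℤ) - 1)

/-!
The `ℓ²` sum is dominated by the `ℓ¹` sum. For nested averaging sets `s ⊆ t`,
`𝔼_s g - 𝔼_t g = (|s|⁻¹ - |t|⁻¹) ∑_s g - |t|⁻¹ ∑_{t \ s} g`. Along a nested chain inside `H`
whose members all have at least `m` elements, the coefficients `|s|⁻¹ - |t|⁻¹` telescope to at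
most `m⁻¹`, and the pieces `t \ s` are disjoint subsets of `H`, so the total variation of the
averages is at most `2 m⁻¹ ∑_H |g|`; take `m = c |H|`.
-/

open Finset
open scoped BigOperators

theorem Real.sqrt_sum_sq_le_sum_abs {ι : Type*} (s : Finset ι) (a : ι → ℝ) :
    √(∑ i ∈ s, a i ^ 2) ≤ ∑ i ∈ s, |a i| :=
  Real.sqrt_le_iff.mpr ⟨sum_nonneg fun _ _ => abs_nonneg _, by
    simpa only [sq_abs] using sum_sq_le_sq_sum_of_nonneg fun i _ => abs_nonneg (a i)⟩

namespace Finset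

variable {α : Type*}

theorem inv_card_le_inv_card_of_subset {s t : Finset α} (hs : s.Nonempty) (hst : s ⊆ t) :
    (#t : ℝ)⁻¹ ≤ (#s : ℝ)⁻¹ :=
  inv_anti₀ (by exact_mod_cast hs.card_pos) (by exact_mod_cast card_le_card hst)

theorem expect_sub_expect_of_subset [DecidableEq α] {s t : Finset α} (hst : s ⊆ t) (g : α → ℝ) :
    𝔼 y ∈ s, g y - 𝔼 y ∈ t, g y
      = ((#s : ℝ)⁻¹ - (#t : ℝ)⁻¹) * ∑ y ∈ s, g y - (#t : ℝ)⁻¹ * ∑ y ∈ t \ s, g y := by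
  rw [expect_eq_sum_div_card, expect_eq_sum_div_card, ← sum_sdiff hst]
  ring

theorem abs_expect_sub_expect_le_of_subset [DecidableEq α] {s t : Finset α} (hs : s.Nonempty)
    (hst : s ⊆ t) (g : α → ℝ) :
    |𝔼 y ∈ s, g y - 𝔼 y ∈ t, g y|
      ≤ ((#s : ℝ)⁻¹ - (#t : ℝ)⁻¹) * ∑ y ∈ s, |g y| + (#t : ℝ)⁻¹ * ∑ y ∈ t \ s, |g y| := by
  have hcoef : 0 ≤ (#s : ℝ)⁻¹ - (#t : ℝ)⁻¹ :=
    sub_nonneg.mpr (inv_card_le_inv_card_of_subset hs hst)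
  rw [expect_sub_expect_of_subset hst]
  calc _ ≤ |((#s : ℝ)⁻¹ - (#t : ℝ)⁻¹) * ∑ y ∈ s, g y| + |(#t : ℝ)⁻¹ * ∑ y ∈ t \ s, g y| :=
        abs_sub _ _
    _ ≤ _ := by
      rw [abs_mul, abs_mul, abs_of_nonneg hcoef, abs_inv, Nat.abs_cast]
      gcongr ?_ * ?_ + ?_ * ?_ <;> exact abs_sum_le_sum_abs _ _

theorem sum_abs_expect_sub_expect_le {F : ℕ → Finset α} {H : Finset α} {m : ℝ} {N : ℕ}
    (hm : 0 < m) (hmono : ∀ i < N, F i ⊆ F (i + 1)) (hH : ∀ i ≤ N, F i ⊆ H)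
    (hcard : ∀ i ≤ N, m ≤ #(F i)) (g : α → ℝ) :
    ∑ i ∈ range N, |𝔼 y ∈ F i, g y - 𝔼 y ∈ F (i + 1), g y| ≤ 2 / m * ∑ y ∈ H, |g y| := by
  classical
  set S := ∑ y ∈ H, |g y|
  set u : ℕ → ℝ := fun i => (#(F i) : ℝ)⁻¹
  set v : ℕ → ℝ := fun i => ∑ y ∈ F i, |g y|
  have hS : ∀ i ≤ N, v i ≤ S := fun i hi =>
    sum_le_sum_of_subset_of_nonneg (hH i hi) fun _ _ _ => abs_nonneg _
  have hu : ∀ i ≤ N, u i ≤ m⁻¹ := fun i hi => inv_anti₀ hm (hcard i hi)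
  have hnonempty : ∀ i ≤ N, (F i).Nonempty := fun i hi =>
    card_pos.mp (by exact_mod_cast hm.trans_le (hcard i hi))
  have hterm : ∀ i < N, |𝔼 y ∈ F i, g y - 𝔼 y ∈ F (i + 1), g y|
      ≤ (u i - u (i + 1)) * S + m⁻¹ * (v (i + 1) - v i) := by
    intro i hi
    have hcoef : 0 ≤ u i - u (i + 1) :=
      sub_nonneg.mpr (inv_card_le_inv_card_of_subset (hnonempty i hi.le) (hmono i hi))
    have hdiff : ∑ y ∈ F (i + 1) \ F i, |g y| = v (i + 1) - v i :=
      eq_sub_of_add_eq (sum_sdiff (hmono i hi))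
    calc _ ≤ (u i - u (i + 1)) * v i + u (i + 1) * (v (i + 1) - v i) :=
          hdiff ▸ abs_expect_sub_expect_le_of_subset (hnonempty i hi.le) (hmono i hi) g
      _ ≤ _ := by
        have : 0 ≤ v (i + 1) - v i := hdiff ▸ sum_nonneg fun _ _ => abs_nonneg _
        gcongr
        · exact hS i hi.le
        · exact hu (i + 1) hi
  calc _ ≤ ∑ i ∈ range N, ((u i - u (i + 1)) * S + m⁻¹ * (v (i + 1) - v i)) :=
        sum_le_sum fun i hi => hterm i (mem_range.mp hi)
    _ = (u 0 - u N) * S + m⁻¹ * (v N - v 0) := by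
        rw [sum_add_distrib, ← sum_mul, ← mul_sum, sum_range_sub' u, sum_range_sub v]
    _ ≤ m⁻¹ * S + m⁻¹ * S := by
        have hS0 : 0 ≤ S := sum_nonneg fun _ _ => abs_nonneg _
        have huN : 0 ≤ u N := by positivity
        have hv0 : 0 ≤ v 0 := sum_nonneg fun _ _ => abs_nonneg _
        gcongr
        · linarith [hu 0 N.zero_le]
        · linarith [hS N le_rfl]
    _ = 2 / m * S := by ring

end Finset

/-- Pointwise bound for the short square function at scale `k`: for a nested family
`E_t ⊂ H_k` with `c|H_k| ≤ |E_t|` for `2^k ≤ t < 2^{k+1}`, any increasing selection of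
times satisfies `(∑_i |(A_{t_i} - A_{t_{i+1}})f(x)|²)^{1/2} ≤ C(c,d) χ_{H_k} * |f|(x)`. -/
theorem stmt_16 (d : ℕ) (c : ℝ) (hc : 0 < c) :
    ∃ C : ℝ, 0 < C ∧
      ∀ (k : ℕ) (e : Fin d → ℕ) (E : ℕ → Finset (Fin d → ℤ)),
        (∀ t, 2 ^ k ≤ t → t < 2 ^ (k + 1) →
          E t ⊆ HrectF d e ∧ (E t).Nonempty ∧ c * (HrectF d e).card ≤ (E t).card) →
        (∀ t t', 2 ^ k ≤ t → t ≤ t' → t' < 2 ^ (k + 1) → E t ⊆ E t') →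
        ∀ (f : (Fin d → ℤ) → ℝ) (x : Fin d → ℤ) (N : ℕ) (t : ℕ → ℕ),
          StrictMono t → (∀ i ≤ N, 2 ^ k ≤ t i ∧ t i < 2 ^ (k + 1)) →
          Real.sqrt (∑ i ∈ Finset.range N,
              (((E (t i)).card : ℝ)⁻¹ * (∑ y ∈ E (t i), f (x - y))
                - ((E (t (i + 1))).card : ℝ)⁻¹ * (∑ y ∈ E (t (i + 1)), f (x - y))) ^ 2)
            ≤ C * (((HrectF d e).card : ℝ)⁻¹ * ∑ y ∈ HrectF d e, |f (x - y)|) := by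
  refine ⟨2 / c, by positivity, fun k e E hE hnest f x N t ht hti => ?_⟩
  have hEt : ∀ i ≤ N, _ := fun i hi => hE (t i) (hti i hi).1 (hti i hi).2
  have hHpos : (0 : ℝ) < #(HrectF d e) := by
    exact_mod_cast ((hEt 0 N.zero_le).2.1.mono (hEt 0 N.zero_le).1).card_pos
  have hvar := sum_abs_expect_sub_expect_le (F := fun i => E (t i)) (mul_pos hc hHpos)
    (fun i hi => hnest _ _ (hti i hi.le).1 (ht.monotone i.le_succ) (hti (i + 1) hi).2)
    (fun i hi => (hEt i hi).1) (fun i hi => (hEt i hi).2.2) (fun y => f (x - y))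
  simp only [expect_eq_sum_div_card, div_eq_inv_mul] at hvar
  calc _ ≤ _ := Real.sqrt_sum_sq_le_sum_abs _ _
    _ ≤ _ := hvar
    _ = _ := by field_simp
end
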